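/- arXiv:2409.09538 — 8 statements merged into one kernel-verified Lean document; each statement's English description precedes it below -/
import Mathlib

section
/- Let μ be a probability measure on ℂ that is radially symmetric about the origin, with radial cumulative distribution function F_R(r) = μ({x : |x| ≤ r}). Then for every nonzero z ∈ ℂ such that |z| is a continuity point of F_R, the Cauchy–Stieltjes transform satisfies m_μ(z) = F_R(|z|) / z, where m_μ(z) = ∫_ℂ 1/(z - x) dμ(x). Moreover, if 0 is a continuity point of F_R then m_μ(0) = 0. -/
open MeasureTheory

/-!
Averaging over rotations and applying Fubini replaces the integrand `(z - x)⁻¹` by its average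
over the circle of radius `‖x‖`. By the mean value property this average is `z⁻¹` when
`‖x‖ < ‖z‖` and `0` when `‖x‖ > ‖z‖`, and the circle `‖x‖ = ‖z‖` is `μ`-null because `‖z‖` is a
continuity point of the radial distribution function.
-/

open Complex Metric Real Set

theorem measure_singleton_eq_zero_of_continuousAt_real_Iic {ν : Measure ℝ}
    [IsProbabilityMeasure ν] {a : ℝ} (hc : ContinuousAt (fun r => ν.real (Iic r)) a) :
    ν {a} = 0 := by
  have hcdf : ProbabilityTheory.cdf ν = fun r => ν.real (Iic r) :=
    funext (ProbabilityTheory.cdf_eq_real ν)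
  rw [← ProbabilityTheory.measure_cdf ν, StieltjesFunction.measure_singleton, hcdf,
    hc.continuousWithinAt.leftLim_eq, sub_self, ENNReal.ofReal_zero]

section LevelSet

variable {α : Type*} [MeasurableSpace α] {μ : Measure α} {f : α → ℝ} {r : ℝ}

theorem measure_eq_zero_of_continuousAt_measureReal_le [IsProbabilityMeasure μ]
    (hf : Measurable f) (hc : ContinuousAt (fun s => μ.real {x | f x ≤ s}) r) :
    μ {x | f x = r} = 0 := by
  have : IsProbabilityMeasure (μ.map f) := Measure.isProbabilityMeasure_map hf.aemeasurable
  have hcdf : (fun s => (μ.map f).real (Iic s)) = fun s => μ.real {x | f x ≤ s} :=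
    funext fun s => map_measureReal_apply hf measurableSet_Iic
  have hatom := measure_singleton_eq_zero_of_continuousAt_real_Iic (hcdf ▸ hc)
  rwa [Measure.map_apply hf (measurableSet_singleton r)] at hatom

theorem measureReal_lt_eq_measureReal_le (h : μ {x | f x = r} = 0) :
    μ.real {x | f x < r} = μ.real {x | f x ≤ r} := by
  have hsplit : {x | f x ≤ r} = {x | f x < r} ∪ {x | f x = r} := by
    ext x
    simp [le_iff_lt_or_eq]
  rw [hsplit]
  exact measureReal_congr (union_ae_eq_left_of_ae_eq_empty (ae_eq_empty.2 h)).symm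

end LevelSet

theorem circleAverage_inv_sub_of_abs_lt {z : ℂ} {r : ℝ} (h : |r| < ‖z‖) :
    circleAverage (fun w => (z - w)⁻¹) 0 r = z⁻¹ := by
  have hz : ∀ w ∈ closedBall (0 : ℂ) |r|, z - w ≠ 0 := fun w hw => by
    rw [sub_ne_zero]
    rintro rfl
    exact (mem_closedBall_zero_iff.1 hw).not_gt h
  have hdiff : DifferentiableOn ℂ (fun w => (z - w)⁻¹) (closedBall (0 : ℂ) |r|) :=
    ((differentiableOn_const z).sub differentiableOn_id).inv hz
  simpa using hdiff.diffContOnCl_ball subset_rfl |>.circleAverage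

theorem circleAverage_inv_sub_of_lt_abs {z : ℂ} {r : ℝ} (h : ‖z‖ < |r|) :
    circleAverage (fun w => (z - w)⁻¹) 0 r = 0 := by
  have hz : ∀ w ∈ closedBall (0 : ℂ) |1|, z * w - r ≠ 0 := fun w hw => by
    rw [sub_ne_zero]
    intro he
    have : ‖z * w‖ ≤ ‖z‖ := by
      rw [norm_mul]; exact mul_le_of_le_one_right (norm_nonneg z) (by simpa using hw)
    rw [he, Complex.norm_real, Real.norm_eq_abs] at this
    linarith
  have hdiff : DifferentiableOn ℂ (fun w => w / (z * w - r)) (closedBall (0 : ℂ) |1|) :=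
    differentiableOn_id.div ((differentiableOn_const z).mul differentiableOn_id |>.sub_const _) hz
  -- Inverting the unit circle turns `(z - r w)⁻¹` into a function holomorphic on the unit disc.
  rw [circleAverage_eq_circleAverage_zero_one, ← circleAverage_zero_one_congr_inv,
    circleAverage_congr_sphere (f₂ := fun w => w / (z * w - r)),
    (hdiff.diffContOnCl_ball subset_rfl).circleAverage, zero_div]
  intro w hw
  have hw0 : w ≠ 0 := by rintro rfl; simp at hw
  simp only [add_zero]
  field_simp

def IsRotationInvariant (μ : Measure ℂ) : Prop :=
  ∀ θ : ℝ, μ.map (fun x => exp (θ * I) * x) = μ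

section RotationInvariant

variable {μ : Measure ℂ} [SFinite μ]

theorem map_prod_rotate (hμ : IsRotationInvariant μ) (ν : Measure ℝ) [SFinite ν] :
    (ν.prod μ).map (fun p : ℝ × ℂ => exp (p.1 * I) * p.2) = ν univ • μ := by
  have hrot : Measurable fun p : ℝ × ℂ => exp (p.1 * I) * p.2 := by fun_prop
  ext s hs
  rw [Measure.map_apply hrot hs, Measure.prod_apply (hrot hs), Measure.smul_apply, smul_eq_mul,
    mul_comm, ← lintegral_const]
  refine lintegral_congr fun θ => ?_
  conv_rhs => rw [← hμ θ, Measure.map_apply (by fun_prop) hs]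
  rfl

theorem integral_eq_integral_circleAverage {E : Type*} [NormedAddCommGroup E] [NormedSpace ℝ E]
    [CompleteSpace E] (hμ : IsRotationInvariant μ) {g : ℂ → E} (hg : Integrable g μ) :
    ∫ x, g x ∂μ = ∫ x, circleAverage g 0 ‖x‖ ∂μ := by
  set ν : Measure ℝ := volume.restrict (Ioc 0 (2 * π))
  have hν : ν univ = ENNReal.ofReal (2 * π) := by simp [ν]
  have hmap := map_prod_rotate hμ ν
  have hrot : Measurable fun p : ℝ × ℂ => exp (p.1 * I) * p.2 := by fun_prop
  have hint : Integrable (fun p : ℝ × ℂ => g (exp (p.1 * I) * p.2)) (ν.prod μ) := by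
    refine Integrable.comp_measurable ?_ hrot
    rw [hmap]
    exact hg.smul_measure (hν ▸ ENNReal.ofReal_ne_top)
  have hcircle (x : ℂ) :
      circleAverage g 0 ‖x‖ = (2 * π)⁻¹ • ∫ θ, g (exp (θ * I) * x) ∂ν := by
    rw [circleAverage_eq_integral_add (arg x), intervalIntegral.integral_of_le two_pi_pos.le]
    congr with θ
    congr 1
    rw [circleMap, zero_add, ofReal_add, add_mul, Complex.exp_add, mul_left_comm,
      norm_mul_exp_arg_mul_I]
  simp_rw [hcircle]
  rw [integral_smul, ← integral_prod_symm _ hint, ← integral_map hrot.aemeasurable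
    (by rw [hmap]; exact hg.aestronglyMeasurable.smul_measure _), hmap, integral_smul_measure, hν,
    ENNReal.toReal_ofReal two_pi_pos.le, smul_smul, inv_mul_cancel₀ two_pi_pos.ne', one_smul]

theorem integral_inv_sub_eq_measureReal_smul (hμ : IsRotationInvariant μ) (z : ℂ)
    (hz : μ {x | ‖x‖ = ‖z‖} = 0)
    (hint : Integrable (fun x => (z - x)⁻¹) μ) :
    ∫ x, (z - x)⁻¹ ∂μ = μ.real {x | ‖x‖ < ‖z‖} • z⁻¹ := by
  rw [integral_eq_integral_circleAverage hμ hint,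
    ← integral_indicator_const _ (measurableSet_lt measurable_norm measurable_const)]
  refine integral_congr_ae ?_
  filter_upwards [measure_eq_zero_iff_ae_notMem.1 hz] with x hx
  rcases lt_or_gt_of_ne hx with h | h
  · rw [indicator_of_mem (s := {a : ℂ | ‖a‖ < ‖z‖}) h,
      circleAverage_inv_sub_of_abs_lt (by rwa [abs_norm])]
  · rw [indicator_of_notMem (s := {a : ℂ | ‖a‖ < ‖z‖}) h.not_gt,
      circleAverage_inv_sub_of_lt_abs (by rwa [abs_norm])]

end RotationInvariant

/-- Computation of the Cauchy–Stieltjes transform of a radially symmetric measure: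
`m_μ(z) = F_R(|z|)/z` at nonzero continuity points `|z|` of the radial c.d.f.,
and `m_μ(0) = 0` if `0` is a continuity point. -/
theorem stieltjes_transform_radial (μ : Measure ℂ) [IsProbabilityMeasure μ]
    (hsym : ∀ θ : ℝ, μ.map (fun z => Complex.exp (θ * Complex.I) * z) = μ)
    (F : ℝ → ℝ) (hF : ∀ r, F r = (μ {x : ℂ | ‖x‖ ≤ r}).toReal) :
    (∀ z : ℂ, z ≠ 0 → ContinuousAt F ‖z‖ →
      Integrable (fun x => (z - x)⁻¹) μ →
      ∫ x, (z - x)⁻¹ ∂μ = (F ‖z‖ : ℂ) / z) ∧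
    (ContinuousAt F 0 → Integrable (fun x : ℂ => ((0 : ℂ) - x)⁻¹) μ →
      ∫ x, ((0 : ℂ) - x)⁻¹ ∂μ = 0) := by
  have hsphere : ∀ r, ContinuousAt F r → μ {x | ‖x‖ = r} = 0 := fun r hc =>
    measure_eq_zero_of_continuousAt_measureReal_le measurable_norm (funext hF ▸ hc)
  refine ⟨fun z _ hc hint => ?_, fun hc hint => ?_⟩
  · rw [integral_inv_sub_eq_measureReal_smul hsym z (hsphere _ hc) hint,
      measureReal_lt_eq_measureReal_le (hsphere _ hc), hF, real_smul, div_eq_mul_inv]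
    rfl
  · rw [integral_inv_sub_eq_measureReal_smul hsym 0 (by simpa using hsphere 0 hc) hint, inv_zero,
      smul_zero]
end

section
/- Let μ be a radially symmetric probability measure supported on the unit disk whose radial density f_R on {1-ε ≤ |z| ≤ 1} satisfies f_R(r) ≤ C_μ(1-r)^α with α ≥ 0. Then there is a constant κ > 0 such that for all x, y in the annulus A_ε = {z : 1-ε ≤ |z| ≤ 1}, one has |m_μ(x) - m_μ(y)| ≤ κ |x - y|, where m_μ(z) = F_R(|z|)/z is the Cauchy–Stieltjes transform of μ. -/
open MeasureTheory

/-- Lipschitz continuity of the Cauchy–Stieltjes transform `m_μ(z) = F_R(|z|)/z`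
on the annulus `A_ε` when the radial density is bounded by `C_μ (1-r)^α` with `α ≥ 0`. -/
theorem stieltjes_lipschitz_on_annulus (μ : Measure ℂ) [IsProbabilityMeasure μ]
    (ε α Cμ : ℝ) (hε : 0 < ε) (hε1 : ε < 1) (hα : 0 ≤ α) (hC : 0 < Cμ)
    (hsupp : μ {z : ℂ | 1 < ‖z‖} = 0)
    (hsym : ∀ θ : ℝ, μ.map (fun z => Complex.exp (θ * Complex.I) * z) = μ)
    (F : ℝ → ℝ) (hF : ∀ r, F r = (μ {z : ℂ | ‖z‖ ≤ r}).toReal)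
    (hdens : ∀ r s, 1 - ε ≤ r → r ≤ s → s ≤ 1 →
      F s - F r ≤ ∫ t in r..s, Cμ * (1 - t) ^ α) :
    ∃ κ > (0 : ℝ), ∀ x y : ℂ, 1 - ε ≤ ‖x‖ → ‖x‖ ≤ 1 → 1 - ε ≤ ‖y‖ → ‖y‖ ≤ 1 →
      ‖(F ‖x‖ : ℂ) / x - (F ‖y‖ : ℂ) / y‖ ≤ κ * ‖x - y‖ := by
  have hε' : (0:ℝ) < 1 - ε := by linarith
  -- F is monotone
  have hmono : ∀ r s : ℝ, r ≤ s → F r ≤ F s := by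
    intro r s h
    rw [hF, hF]
    exact ENNReal.toReal_mono (measure_ne_top μ _)
      (measure_mono (fun z hz => le_trans hz h))
  have hF0 : ∀ r, 0 ≤ F r := by
    intro r; rw [hF]; exact ENNReal.toReal_nonneg
  have hF1 : ∀ r, F r ≤ 1 := by
    intro r; rw [hF]
    have : μ {z : ℂ | ‖z‖ ≤ r} ≤ 1 := prob_le_one
    simpa using ENNReal.toReal_mono (by norm_num) this
  -- key Lipschitz bound for F on the annulus
  have hkey : ∀ r s : ℝ, 1 - ε ≤ r → r ≤ s → s ≤ 1 → F s - F r ≤ Cμ * (s - r) := by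
    intro r s h1 h2 h3
    have hcont : Continuous fun t : ℝ => Cμ * (1 - t) ^ α := by
      apply Continuous.mul continuous_const
      exact (continuous_const.sub continuous_id).rpow_const (fun x => Or.inr hα)
    have hb : ∫ t in r..s, Cμ * (1 - t) ^ α ≤ Cμ * (s - r) := by
      calc ∫ t in r..s, Cμ * (1 - t) ^ α ≤ ∫ _t in r..s, Cμ := by
            apply intervalIntegral.integral_mono_on h2
              (hcont.intervalIntegrable _ _) intervalIntegrable_const
            intro t ht
            have ht1 : r ≤ t := ht.1
            have ht2 : t ≤ s := ht.2
            have h1t : 0 ≤ 1 - t := by linarith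
            have h1t' : 1 - t ≤ 1 := by linarith
            have hle : (1 - t) ^ α ≤ 1 := Real.rpow_le_one h1t h1t' hα
            nlinarith
        _ = Cμ * (s - r) := by
            simp [intervalIntegral.integral_const, smul_eq_mul, mul_comm]
    linarith [hdens r s h1 h2 h3]
  refine ⟨(Cμ + 1) / (1 - ε) ^ 2, by positivity, ?_⟩
  intro x y hx1 hx2 hy1 hy2
  have hx0 : x ≠ 0 := by
    intro h; rw [h, norm_zero] at hx1; linarith
  have hy0 : y ≠ 0 := by
    intro h; rw [h, norm_zero] at hy1; linarith
  set a := F ‖x‖ with ha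
  set b := F ‖y‖ with hb
  -- |a - b| ≤ Cμ * ‖x - y‖
  have hnn : |(‖x‖ : ℝ) - ‖y‖| ≤ ‖x - y‖ := abs_norm_sub_norm_le x y
  have hab : |a - b| ≤ Cμ * ‖x - y‖ := by
    rcases le_total ‖x‖ ‖y‖ with h | h
    · have h1 : a ≤ b := hmono _ _ h
      have h2 : b - a ≤ Cμ * (‖y‖ - ‖x‖) := hkey _ _ hx1 h hy2
      have h3 : ‖y‖ - ‖x‖ ≤ ‖x - y‖ := by
        have := abs_le.mp hnn
        linarith [this.1]
      rw [abs_of_nonpos (by linarith)]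
      nlinarith
    · have h1 : b ≤ a := hmono _ _ h
      have h2 : a - b ≤ Cμ * (‖x‖ - ‖y‖) := hkey _ _ hy1 h hx2
      have h3 : ‖x‖ - ‖y‖ ≤ ‖x - y‖ := by
        have := abs_le.mp hnn
        linarith [this.2]
      rw [abs_of_nonneg (by linarith)]
      nlinarith
  -- algebraic decomposition
  have hdecomp : (a : ℂ) / x - (b : ℂ) / y
      = ((a : ℂ) - (b : ℂ)) / x + (b : ℂ) * (y - x) / (x * y) := by
    field_simp
    ring
  have hnorm1 : ‖((a : ℂ) - (b : ℂ)) / x‖ = |a - b| / ‖x‖ := by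
    rw [norm_div]
    congr 1
    rw [← Complex.ofReal_sub, Complex.norm_real]
    exact Real.norm_eq_abs _
  have hnorm2 : ‖(b : ℂ) * (y - x) / (x * y)‖ = |b| * ‖x - y‖ / (‖x‖ * ‖y‖) := by
    rw [norm_div, norm_mul, norm_mul, Complex.norm_real, ← norm_neg (y - x)]
    congr 2
    abel
  have hxpos : (0:ℝ) < ‖x‖ := by linarith
  have hypos : (0:ℝ) < ‖y‖ := by linarith
  have hN : (0:ℝ) ≤ ‖x - y‖ := norm_nonneg _
  have habs : (0:ℝ) ≤ |a - b| := abs_nonneg _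
  have hterm1 : |a - b| / ‖x‖ ≤ Cμ * ‖x - y‖ / (1 - ε) ^ 2 := by
    rw [div_le_div_iff₀ hxpos (by positivity)]
    nlinarith [mul_le_mul_of_nonneg_right hab (sq_nonneg (1 - ε)),
      mul_le_mul_of_nonneg_left hx1 (mul_nonneg hC.le hN),
      mul_le_mul_of_nonneg_left hε'.le (mul_nonneg hC.le hN)]
  have hterm2 : |b| * ‖x - y‖ / (‖x‖ * ‖y‖) ≤ 1 * ‖x - y‖ / (1 - ε) ^ 2 := by
    rw [div_le_div_iff₀ (by positivity) (by positivity)]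
    have hb1 : |b| ≤ 1 := by rw [abs_of_nonneg (hF0 _)]; exact hF1 _
    have hxy : (1 - ε) ^ 2 ≤ ‖x‖ * ‖y‖ := by nlinarith [mul_le_mul hx1 hy1 hε'.le hxpos.le]
    nlinarith [mul_le_mul_of_nonneg_left hxy hN,
      mul_le_mul_of_nonneg_right hb1 (mul_nonneg hN (sq_nonneg (1 - ε)))]
  calc ‖(a : ℂ) / x - (b : ℂ) / y‖
      ≤ ‖((a : ℂ) - (b : ℂ)) / x‖ + ‖(b : ℂ) * (y - x) / (x * y)‖ := by
        rw [hdecomp]; exact norm_add_le _ _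
    _ = |a - b| / ‖x‖ + |b| * ‖x - y‖ / (‖x‖ * ‖y‖) := by rw [hnorm1, hnorm2]
    _ ≤ Cμ * ‖x - y‖ / (1 - ε) ^ 2 + 1 * ‖x - y‖ / (1 - ε) ^ 2 := by
        exact add_le_add hterm1 hterm2
    _ = (Cμ + 1) / (1 - ε) ^ 2 * ‖x - y‖ := by ring
end

section
/- Let x_1, …, x_n ∈ ℂ be points that are pairwise δ-separated (|x_i - x_j| > δ for i ≠ j), with δ > 1/n and n ≥ 3. Then for any z ∈ ℂ, (1/n) ∑_{i=1}^n |z - x_i|^{-2} · 1{|z - x_i| > δ/2} < (172 / (n δ²)) · log n. -/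
/-!
Group the points by the shell `k (δ/2) ≤ |z - x_i| < (k+1) (δ/2)` they lie in. The disjoint
disks of radius `δ/2` around the points of the `k`-th shell lie in an annulus of area
`(6k+3) π (δ/2)²`, so that shell holds at most `6k+3 ≤ 9k` points, each contributing at most
`(k δ/2)⁻²`. Capping `k` at `n` (there are only `n` points), the sum is at most
`(4/δ²) · 9 · (1 + log n)`, a harmonic sum.
-/

open Finset

open Metric MeasureTheory Module in
theorem card_mul_pow_le_sub_pow_of_separated {E ι : Type*} [NormedAddCommGroup E]
    [NormedSpace ℝ E] [FiniteDimensional ℝ E] (T : Finset ι) (x : ι → E) (z : E)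
    {r R₁ R₂ : ℝ} (hr : 0 < r) (hR₁ : 0 ≤ R₁) (hR : R₁ ≤ R₂)
    (hsep : (T : Set ι).Pairwise fun i j => 2 * r ≤ dist (x i) (x j))
    (hT : ∀ i ∈ T, R₁ + r ≤ dist (x i) z ∧ dist (x i) z + r ≤ R₂) :
    #T * r ^ finrank ℝ E ≤ R₂ ^ finrank ℝ E - R₁ ^ finrank ℝ E := by
  borelize E
  obtain ⟨μ, hμ⟩ : ∃ μ : Measure E, μ.IsAddHaarMeasure := ⟨Measure.addHaar, inferInstance⟩
  have hball {y : E} {s : ℝ} (hs : 0 < s) :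
      μ.real (ball y s) = s ^ finrank ℝ E * μ.real (ball 0 1) := by
    rw [measureReal_def, Measure.addHaar_ball_of_pos μ y hs, ENNReal.toReal_mul,
      ENNReal.toReal_ofReal (by positivity), measureReal_def]
  have hunit : 0 < μ.real (ball 0 1) :=
    ENNReal.toReal_pos (measure_ball_pos μ 0 one_pos).ne' measure_ball_lt_top.ne
  have hdisj : (T : Set ι).PairwiseDisjoint fun i => ball (x i) r :=
    fun i hi j hj hij => ball_disjoint_ball (by linarith [hsep hi hj hij])
  have hinner : Disjoint (closedBall z R₁) (⋃ i ∈ T, ball (x i) r) := by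
    refine Set.disjoint_iUnion₂_right.2 fun i hi => closedBall_disjoint_ball ?_
    rw [dist_comm]; linarith [(hT i hi).1]
  have hsub : closedBall z R₁ ∪ ⋃ i ∈ T, ball (x i) r ⊆ closedBall z R₂ := by
    refine Set.union_subset (closedBall_subset_closedBall hR) (Set.iUnion₂_subset fun i hi => ?_)
    intro w hw
    rw [mem_ball] at hw
    rw [mem_closedBall]
    linarith [dist_triangle w (x i) z, (hT i hi).2]
  have hvol : μ.real (closedBall z R₁) + ∑ i ∈ T, μ.real (ball (x i) r) ≤
      μ.real (closedBall z R₂) := by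
    rw [← measureReal_biUnion_finset hdisj (fun _ _ => measurableSet_ball),
      ← measureReal_union hinner (Finset.measurableSet_biUnion _ fun _ _ => measurableSet_ball)
        measure_closedBall_lt_top.ne
        ((measure_mono (Set.subset_union_right.trans hsub)).trans_lt measure_closedBall_lt_top).ne]
    exact measureReal_mono hsub measure_closedBall_lt_top.ne
  rw [Measure.addHaar_real_closedBall μ z hR₁,
    Measure.addHaar_real_closedBall μ z (hR₁.trans hR)] at hvol
  simp only [hball hr, sum_const, nsmul_eq_mul] at hvol
  refine le_of_mul_le_mul_right ?_ hunit
  linarith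

theorem card_floor_norm_sub_div_eq_le {ι : Type*} (s : Finset ι) (x : ι → ℂ) (z : ℂ) {ρ : ℝ}
    (hρ : 0 < ρ) (hsep : (s : Set ι).Pairwise fun i j => 2 * ρ ≤ dist (x i) (x j)) {j : ℕ}
    (hj : 1 ≤ j) : #{i ∈ s | ⌊‖z - x i‖ / ρ⌋₊ = j} ≤ 6 * j + 3 := by
  have hshell : ∀ i ∈ {i ∈ s | ⌊‖z - x i‖ / ρ⌋₊ = j},
      ((j : ℝ) - 1) * ρ + ρ ≤ dist (x i) z ∧ dist (x i) z + ρ ≤ ((j : ℝ) + 2) * ρ := by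
    intro i hi
    rw [mem_filter, Nat.floor_eq_iff (by positivity), le_div_iff₀ hρ, div_lt_iff₀ hρ] at hi
    rw [dist_comm, dist_eq_norm]
    constructor <;> linarith [hi.2.1, hi.2.2]
  have hj' : (1 : ℝ) ≤ j := by exact_mod_cast hj
  have hpack := card_mul_pow_le_sub_pow_of_separated _ x z hρ (by nlinarith) (by nlinarith)
    (hsep.mono (filter_subset _ s)) hshell
  rw [Complex.finrank_real_complex] at hpack
  have : (#{i ∈ s | ⌊‖z - x i‖ / ρ⌋₊ = j} : ℝ) * ρ ^ 2 ≤ (6 * j + 3) * ρ ^ 2 := by linarith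
  exact_mod_cast le_of_mul_le_mul_right this (by positivity)

theorem sum_inv_sq_le_of_card_fiber_le_of_mem_Icc {ι : Type*} (s : Finset ι) (k : ι → ℕ)
    {N C : ℕ} (hk : ∀ i ∈ s, k i ∈ Icc 1 N)
    (hfiber : ∀ j ∈ Icc 1 N, #{i ∈ s | k i = j} ≤ C * j) :
    ∑ i ∈ s, ((k i : ℝ) ^ 2)⁻¹ ≤ C * (1 + Real.log N) := by
  rw [← sum_fiberwise_of_maps_to hk]
  calc ∑ j ∈ Icc 1 N, ∑ i ∈ s with k i = j, ((k i : ℝ) ^ 2)⁻¹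
      = ∑ j ∈ Icc 1 N, #{i ∈ s | k i = j} * ((j : ℝ) ^ 2)⁻¹ := by
        refine sum_congr rfl fun j _ => ?_
        rw [sum_congr rfl fun i hi => by rw [(mem_filter.1 hi).2], sum_const, nsmul_eq_mul]
    _ ≤ ∑ j ∈ Icc 1 N, (C * j : ℝ) * ((j : ℝ) ^ 2)⁻¹ := by
        gcongr with j hj
        exact_mod_cast hfiber j hj
    _ = C * harmonic N := by
        rw [harmonic_eq_sum_Icc]
        push_cast
        rw [mul_sum]
        refine sum_congr rfl fun j hj => ?_
        have : (j : ℝ) ≠ 0 := by have := (mem_Icc.1 hj).1; positivity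
        field_simp
    _ ≤ C * (1 + Real.log N) := by gcongr; exact harmonic_le_one_add_log N

-- Capping `k` at `N` keeps the fiber bounds: the fiber over `N` has at most `#s ≤ N` elements.
theorem sum_inv_sq_le_of_card_fiber_le {ι : Type*} (s : Finset ι) (k : ι → ℕ) {N C : ℕ}
    (hC : 1 ≤ C) (hs : #s ≤ N) (hk : ∀ i ∈ s, 1 ≤ k i)
    (hfiber : ∀ j, 1 ≤ j → #{i ∈ s | k i = j} ≤ C * j) :
    ∑ i ∈ s, ((k i : ℝ) ^ 2)⁻¹ ≤ C * (1 + Real.log N) := by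
  have hcap : ∀ i ∈ s, min N (k i) ∈ Icc 1 N := fun i hi =>
    mem_Icc.2 ⟨le_min ((card_pos.2 ⟨i, hi⟩).trans_le hs) (hk i hi), min_le_left _ _⟩
  have hcap_fiber : ∀ j ∈ Icc 1 N, #{i ∈ s | min N (k i) = j} ≤ C * j := by
    intro j hj
    obtain ⟨hj1, hjN⟩ := mem_Icc.1 hj
    rcases hjN.lt_or_eq with hjN | rfl
    · refine le_of_eq_of_le (congrArg card (filter_congr fun i _ => ?_)) (hfiber j hj1)
      omega
    · exact (card_filter_le _ _).trans (hs.trans (Nat.le_mul_of_pos_left _ hC))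
  refine (sum_le_sum fun i hi => ?_).trans
    (sum_inv_sq_le_of_card_fiber_le_of_mem_Icc s _ hcap hcap_fiber)
  have : (1 : ℝ) ≤ min N (k i) := by exact_mod_cast (mem_Icc.1 (hcap i hi)).1
  gcongr
  exact_mod_cast min_le_right _ _

theorem inv_sq_le_inv_sq_mul_inv_sq_floor_div {t ρ : ℝ} (hρ : 0 < ρ) (ht : ρ ≤ t) :
    (t ^ 2)⁻¹ ≤ (ρ ^ 2)⁻¹ * ((⌊t / ρ⌋₊ : ℝ) ^ 2)⁻¹ := by
  have hk : (1 : ℝ) ≤ ⌊t / ρ⌋₊ := by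
    exact_mod_cast Nat.le_floor (by rwa [Nat.cast_one, one_le_div hρ])
  have : ⌊t / ρ⌋₊ * ρ ≤ t :=
    (le_div_iff₀ hρ).1 (Nat.floor_le (div_nonneg (hρ.le.trans ht) hρ.le))
  rw [← mul_inv, ← mul_pow, mul_comm]
  gcongr

theorem sum_inv_sq_norm_sub_le_of_separated {ι : Type*} [Fintype ι] (x : ι → ℂ) (z : ℂ)
    {ρ : ℝ} (hρ : 0 < ρ) (hsep : Pairwise fun i j => 2 * ρ ≤ dist (x i) (x j)) :
    ∑ i with ρ < ‖z - x i‖, (‖z - x i‖ ^ 2)⁻¹ ≤ 9 / ρ ^ 2 * (1 + Real.log (Fintype.card ι)) := by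
  set S : Finset ι := {i | ρ < ‖z - x i‖}
  set k : ι → ℕ := fun i => ⌊‖z - x i‖ / ρ⌋₊
  have hk : ∀ i ∈ S, 1 ≤ k i := fun i hi =>
    Nat.le_floor (by rw [Nat.cast_one, one_le_div hρ]; exact (mem_filter.1 hi).2.le)
  have hfiber : ∀ j, 1 ≤ j → #{i ∈ S | k i = j} ≤ 9 * j := fun j hj =>
    (card_floor_norm_sub_div_eq_le S x z hρ (hsep.set_pairwise _) hj).trans (by omega)
  have hsum : ∑ i ∈ S, ((k i : ℝ) ^ 2)⁻¹ ≤ 9 * (1 + Real.log (Fintype.card ι)) := by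
    exact_mod_cast sum_inv_sq_le_of_card_fiber_le S k (by norm_num) (card_le_univ S) hk hfiber
  calc ∑ i ∈ S, (‖z - x i‖ ^ 2)⁻¹
      ≤ ∑ i ∈ S, (ρ ^ 2)⁻¹ * ((k i : ℝ) ^ 2)⁻¹ :=
        sum_le_sum fun i hi => inv_sq_le_inv_sq_mul_inv_sq_floor_div hρ (mem_filter.1 hi).2.le
    _ ≤ 9 / ρ ^ 2 * (1 + Real.log (Fintype.card ι)) := by
        rw [← mul_sum, div_eq_inv_mul, mul_assoc]
        gcongr

open Classical in
/-- Deterministic counting estimate: for `δ`-separated points, the truncated sum of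
inverse squared distances is at most `(172 / (n δ²)) log n`. -/
theorem separated_points_inverse_square_sum (n : ℕ) (hn : 3 ≤ n) (δ : ℝ)
    (hδ : 1 / (n : ℝ) < δ)
    (x : Fin n → ℂ) (hsep : ∀ i j, i ≠ j → δ < ‖x i - x j‖) (z : ℂ) :
    (1 / (n : ℝ)) * ∑ i, (if δ / 2 < ‖z - x i‖ then (‖z - x i‖ ^ 2)⁻¹ else 0) <
      172 / ((n : ℝ) * δ ^ 2) * Real.log n := by
  have hn0 : (0 : ℝ) < n := by positivity
  have hδ0 : 0 < δ := (one_div_pos.2 hn0).trans hδ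
  have hsum := sum_inv_sq_norm_sub_le_of_separated x z (half_pos hδ0)
    fun i j hij => by linarith [hsep i j hij, dist_eq_norm (x i) (x j)]
  rw [Fintype.card_fin, sum_filter] at hsum
  have hlog : 1 ≤ Real.log n := by
    rw [Real.le_log_iff_exp_le hn0]
    exact (Real.exp_one_lt_d9.le.trans (by norm_num)).trans (by exact_mod_cast hn : (3 : ℝ) ≤ n)
  calc (1 / (n : ℝ)) * ∑ i, (if δ / 2 < ‖z - x i‖ then (‖z - x i‖ ^ 2)⁻¹ else 0)
      ≤ 1 / n * (9 / (δ / 2) ^ 2 * (1 + Real.log n)) := by gcongr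
    _ = 36 * (1 + Real.log n) / (n * δ ^ 2) := by field_simp; ring
    _ < 172 / ((n : ℝ) * δ ^ 2) * Real.log n := by
        rw [div_mul_eq_mul_div, div_lt_div_iff_of_pos_right (by positivity)]
        linarith
end

section
/- Let μ be a radially symmetric probability measure supported on the unit disk whose radial density f_R on {1-ε ≤ |z| ≤ 1} satisfies f_R(r) ≤ C_μ(1-r)^α with α ≥ 0, and let X ∼ μ. Then there is a constant C > 0 (depending on μ, α, ε) such that for all 0 ≤ p < 2, sup_{1-ε/2 ≤ |z| ≤ 1} E|z - X|^{-p} ≤ C/(2 - p), and for all 0 ≤ p < 2 + α, sup_{|z| = 1} E|z - X|^{-p} ≤ C/((α+2) - p). -/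
/-!
Split `μ` into its part on the edge annulus `S = {1 - ε ≤ ‖x‖ ≤ 1}` and the rest. The rest
sits in `‖x‖ < 1 - ε`, at distance at least `ε / 2` from `z`, so it contributes at most
`(ε / 2)⁻ᵖ`. On `S` the density bound gives `μ(S ∩ B(z, ρ)) ≤ K ρ²`, and for `‖z‖ = 1` the
factor `(1 - ‖x‖)^α ≤ ρ^α` improves this to `K ρ^(2 + α)`. By the layer-cake formula, ball
growth of order `β` gives `∫ ‖z - x‖⁻ᵖ ≤ 1 + K p / (β - p)` for every `p < β`.
-/

open MeasureTheory Set Metric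
open scoped ENNReal

lemma lintegral_Ioi_one_rpow_of_lt {a : ℝ} (ha : a < -1) {K : ℝ} (hK : 0 ≤ K) :
    ∫⁻ t in Ioi (1 : ℝ), ENNReal.ofReal (K * t ^ a) = ENNReal.ofReal (K / (-a - 1)) := by
  rw [← ofReal_integral_eq_lintegral_ofReal
      ((integrableOn_Ioi_rpow_of_lt ha one_pos).const_mul K),
    integral_const_mul, integral_Ioi_rpow_of_lt ha one_pos, Real.one_rpow]
  · congr 1
    rw [neg_div, ← div_neg, neg_add']
    ring
  · filter_upwards [ae_restrict_mem measurableSet_Ioi] with t ht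
    have : (0 : ℝ) < t := one_pos.trans ht
    positivity

lemma add_mul_div_sub_le_mul_div_sub {A K p β γ : ℝ} (hA : 0 ≤ A) (hK : 0 ≤ K) (hp : 0 ≤ p)
    (hpβ : p < β) (hβγ : β ≤ γ) : A + K * (p / (β - p)) ≤ γ * (A + K) / (β - p) := by
  have hβp : 0 < β - p := sub_pos.mpr hpβ
  rw [le_div_iff₀ hβp, add_mul, mul_assoc, div_mul_cancel₀ _ hβp.ne']
  nlinarith

section InverseDistance

variable {E : Type*} [SeminormedAddCommGroup E]

lemma setOf_lt_rpow_neg_norm_sub_subset_ball (z : E) {t p : ℝ} (ht : 0 < t) (hp : 0 < p) :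
    {x | t < ‖z - x‖ ^ (-p)} ⊆ ball z (t ^ (-p)⁻¹) := by
  intro x hx
  have hzx : 0 < ‖z - x‖ := by
    refine (norm_nonneg _).lt_of_ne fun h => ?_
    rw [mem_ofPred_eq, ← h, Real.zero_rpow (neg_ne_zero.mpr hp.ne')] at hx
    exact ht.not_gt hx
  rw [mem_ball, dist_comm, dist_eq_norm]
  exact (Real.lt_rpow_inv_iff_of_neg hzx ht (neg_neg_of_pos hp)).mpr hx

lemma one_sub_norm_lt_of_mem_ball {z x : E} {ρ : ℝ} (hz : ‖z‖ = 1) (hx : x ∈ ball z ρ) :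
    1 - ‖x‖ < ρ := by
  rw [mem_ball, dist_eq_norm] at hx
  linarith [norm_sub_norm_le z x, norm_sub_rev x z]

variable [MeasurableSpace E]

lemma measurable_rpow_norm_sub [OpensMeasurableSpace E] (z : E) (q : ℝ) :
    Measurable fun x : E => ‖z - x‖ ^ q :=
  (continuous_const.sub continuous_id).norm.measurable.pow_const q

lemma lintegral_rpow_neg_norm_sub_le_of_measure_ball_le [OpensMeasurableSpace E]
    (ν : Measure E) (z : E) {K β p : ℝ} (hK : 0 ≤ K) (hp : 0 ≤ p) (hpβ : p < β)
    (hball : ∀ ρ, 0 < ρ → ν (ball z ρ) ≤ ENNReal.ofReal (K * ρ ^ β)) :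
    ∫⁻ x, ENNReal.ofReal (‖z - x‖ ^ (-p)) ∂ν ≤ ν univ + ENNReal.ofReal (K * (p / (β - p))) := by
  rcases hp.eq_or_lt with rfl | hp
  · simp
  have hlevel : ∀ t ∈ Ioi (1 : ℝ),
      ν {x | t < ‖z - x‖ ^ (-p)} ≤ ENNReal.ofReal (K * t ^ (-(β / p))) := fun t ht => by
    have ht0 : 0 < t := one_pos.trans ht
    calc ν {x | t < ‖z - x‖ ^ (-p)} ≤ ν (ball z (t ^ (-p)⁻¹)) :=
          measure_mono (setOf_lt_rpow_neg_norm_sub_subset_ball z ht0 hp)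
      _ ≤ ENNReal.ofReal (K * (t ^ (-p)⁻¹) ^ β) := hball _ (Real.rpow_pos_of_pos ht0 _)
      _ = ENNReal.ofReal (K * t ^ (-(β / p))) := by
          rw [← Real.rpow_mul ht0.le, inv_neg, neg_mul, inv_mul_eq_div]
  have hexp : -(β / p) < -1 := by
    rw [neg_lt_neg_iff, one_lt_div hp]
    exact hpβ
  rw [lintegral_eq_lintegral_meas_lt ν (ae_of_all _ fun x => by positivity)
      (measurable_rpow_norm_sub z _).aemeasurable,
    ← Ioc_union_Ioi_eq_Ioi zero_le_one]
  refine (lintegral_union_le _ _ _).trans (add_le_add ?_ ?_)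
  · calc ∫⁻ t in Ioc (0 : ℝ) 1, ν {x | t < ‖z - x‖ ^ (-p)}
        ≤ ∫⁻ _ in Ioc (0 : ℝ) 1, ν univ := lintegral_mono fun t => measure_mono (subset_univ _)
      _ = ν univ := by simp
  · calc ∫⁻ t in Ioi (1 : ℝ), ν {x | t < ‖z - x‖ ^ (-p)}
        ≤ ∫⁻ t in Ioi (1 : ℝ), ENNReal.ofReal (K * t ^ (-(β / p))) :=
          setLIntegral_mono' measurableSet_Ioi hlevel
      _ = ENNReal.ofReal (K * (p / (β - p))) := by
          rw [lintegral_Ioi_one_rpow_of_lt hexp hK, neg_neg, mul_div_assoc']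
          congr 1
          field_simp

lemma lintegral_rpow_neg_norm_sub_le_of_le_norm_sub (ν : Measure E) (z : E) {δ p : ℝ}
    (hδ : 0 < δ) (hp : 0 ≤ p) (hfar : ∀ᵐ x ∂ν, δ ≤ ‖z - x‖) :
    ∫⁻ x, ENNReal.ofReal (‖z - x‖ ^ (-p)) ∂ν ≤ ENNReal.ofReal (δ ^ (-p)) * ν univ := by
  rw [← lintegral_const]
  refine lintegral_mono_ae (hfar.mono fun x hx => ENNReal.ofReal_le_ofReal ?_)
  exact Real.rpow_le_rpow_of_nonpos hδ hx (neg_nonpos.mpr hp)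

lemma integral_rpow_neg_norm_sub_le [OpensMeasurableSpace E] (μ : Measure E)
    [IsProbabilityMeasure μ] {S : Set E} (hS : MeasurableSet S) (z : E) {K β δ p : ℝ}
    (hK : 0 ≤ K) (hδ : 0 < δ) (hp : 0 ≤ p) (hpβ : p < β)
    (hball : ∀ ρ, 0 < ρ → μ.restrict S (ball z ρ) ≤ ENNReal.ofReal (K * ρ ^ β))
    (hfar : ∀ᵐ x ∂μ, x ∉ S → δ ≤ ‖z - x‖) :
    ∫ x, ‖z - x‖ ^ (-p) ∂μ ≤ 1 + δ ^ (-p) + K * (p / (β - p)) := by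
  have hnear := lintegral_rpow_neg_norm_sub_le_of_measure_ball_le _ z hK hp hpβ hball
  have hfar' := lintegral_rpow_neg_norm_sub_le_of_le_norm_sub (μ.restrict Sᶜ) z hδ hp
    ((ae_restrict_iff' hS.compl).mpr hfar)
  rw [integral_eq_lintegral_of_nonneg_ae (ae_of_all _ fun x => by positivity)
    (measurable_rpow_norm_sub z _).aestronglyMeasurable]
  refine ENNReal.toReal_le_of_le_ofReal (by positivity) ?_
  rw [← lintegral_add_compl _ hS]
  calc _ ≤ (1 + ENNReal.ofReal (K * (p / (β - p)))) + ENNReal.ofReal (δ ^ (-p)) * 1 := by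
        gcongr
        · exact hnear.trans (by rw [Measure.restrict_apply_univ]; gcongr; exact prob_le_one)
        · exact hfar'.trans (by rw [Measure.restrict_apply_univ]; gcongr; exact prob_le_one)
    _ = ENNReal.ofReal (1 + δ ^ (-p) + K * (p / (β - p))) := by
        have : 0 ≤ p / (β - p) := div_nonneg hp (sub_pos.mpr hpβ).le
        rw [mul_one, add_right_comm, ENNReal.ofReal_add (by positivity) (by positivity),
          ENNReal.ofReal_add zero_le_one (by positivity), ENNReal.ofReal_one]

end InverseDistance

lemma restrict_apply_le_of_density_le {X : Type*} [MeasurableSpace X] {μ ν : Measure X}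
    {S T : Set X} (hS : MeasurableSet S) (hT : MeasurableSet T) {f : X → ℝ}
    (hdens : μ.restrict S = (ν.restrict S).withDensity fun x => ENNReal.ofReal (f x))
    {B : ℝ} (hbd : ∀ x ∈ T ∩ S, f x ≤ B) :
    μ.restrict S T ≤ ENNReal.ofReal B * ν T := by
  rw [hdens, withDensity_apply _ hT, Measure.restrict_restrict hT, ← setLIntegral_const]
  refine (setLIntegral_mono' (hT.inter hS) fun x hx =>
    ENNReal.ofReal_le_ofReal (hbd x hx)).trans ?_
  gcongr
  exact inter_subset_left

lemma Complex.volume_ball_eq_ofReal (z : ℂ) {ρ : ℝ} (hρ : 0 ≤ ρ) :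
    volume (ball z ρ) = ENNReal.ofReal (Real.pi * ρ ^ 2) := by
  rw [Complex.volume_ball, ENNReal.ofReal_mul Real.pi_pos.le, ENNReal.ofReal_pow hρ, mul_comm,
    ← NNReal.coe_real_pi, ENNReal.ofReal_coe_nnreal]

lemma measurableSet_annulus (r R : ℝ) : MeasurableSet {x : ℂ | r ≤ ‖x‖ ∧ ‖x‖ ≤ R} :=
  (measurableSet_le measurable_const measurable_norm).inter
    (measurableSet_le measurable_norm measurable_const)

section EdgeAnnulus

variable {μ : Measure ℂ} {ε α Cμ : ℝ} {f : ℂ → ℝ}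

lemma restrict_edgeAnnulus_ball_le (hε1 : ε < 1) (hC : 0 ≤ Cμ)
    (hdens : μ.restrict {x : ℂ | 1 - ε ≤ ‖x‖ ∧ ‖x‖ ≤ 1} =
      (volume.restrict {x : ℂ | 1 - ε ≤ ‖x‖ ∧ ‖x‖ ≤ 1}).withDensity
        (fun x => ENNReal.ofReal (f x)))
    (hf : ∀ x : ℂ, 1 - ε ≤ ‖x‖ → ‖x‖ ≤ 1 →
      f x ≤ Cμ * (1 - ‖x‖) ^ α / (2 * Real.pi * ‖x‖))
    (z : ℂ) {ρ b : ℝ} (hρ : 0 ≤ ρ)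
    (hb : ∀ x ∈ ball z ρ ∩ {x : ℂ | 1 - ε ≤ ‖x‖ ∧ ‖x‖ ≤ 1}, (1 - ‖x‖) ^ α ≤ b) :
    μ.restrict {x : ℂ | 1 - ε ≤ ‖x‖ ∧ ‖x‖ ≤ 1} (ball z ρ) ≤
      ENNReal.ofReal (Cμ / (2 * (1 - ε)) * b * ρ ^ 2) := by
  have hbd : ∀ x ∈ ball z ρ ∩ {x : ℂ | 1 - ε ≤ ‖x‖ ∧ ‖x‖ ≤ 1},
      f x ≤ Cμ * b / (2 * Real.pi * (1 - ε)) := by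
    rintro x ⟨hxz, hx1, hx2⟩
    have hxb : Cμ * (1 - ‖x‖) ^ α ≤ Cμ * b := by
      gcongr
      exact hb x ⟨hxz, hx1, hx2⟩
    have : 0 ≤ 1 - ‖x‖ := by linarith
    calc f x ≤ Cμ * (1 - ‖x‖) ^ α / (2 * Real.pi * ‖x‖) := hf x hx1 hx2
      _ ≤ Cμ * b / (2 * Real.pi * (1 - ε)) :=
          div_le_div₀ ((by positivity : (0 : ℝ) ≤ _).trans hxb) hxb
            (by have := Real.pi_pos; nlinarith) (by gcongr)
  calc _ ≤ ENNReal.ofReal (Cμ * b / (2 * Real.pi * (1 - ε))) * volume (ball z ρ) :=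
        restrict_apply_le_of_density_le (measurableSet_annulus _ _) measurableSet_ball hdens hbd
    _ = ENNReal.ofReal (Cμ / (2 * (1 - ε)) * b * ρ ^ 2) := by
        rw [Complex.volume_ball_eq_ofReal z hρ, ← ENNReal.ofReal_mul' (by positivity)]
        congr 1
        field_simp [Real.pi_ne_zero]

lemma ae_half_le_norm_sub_of_notMem_edgeAnnulus (hsupp : μ {x : ℂ | 1 < ‖x‖} = 0) {z : ℂ}
    (hz : 1 - ε / 2 ≤ ‖z‖) :
    ∀ᵐ x ∂μ, x ∉ {x : ℂ | 1 - ε ≤ ‖x‖ ∧ ‖x‖ ≤ 1} → ε / 2 ≤ ‖z - x‖ := by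
  have hle : ∀ᵐ x ∂μ, ‖x‖ ≤ 1 := by
    rw [ae_iff]
    simpa only [not_le] using hsupp
  filter_upwards [hle] with x hx1 hx
  have hxε : ‖x‖ < 1 - ε := by
    by_contra h
    exact hx ⟨le_of_not_gt h, hx1⟩
  linarith [norm_sub_norm_le z x]

end EdgeAnnulus

theorem inverse_distance_moments_nonneg_alpha_general (μ : Measure ℂ) [IsProbabilityMeasure μ]
    (ε α Cμ : ℝ) (hε : 0 < ε) (hε1 : ε < 1) (hα : 0 ≤ α) (hC : 0 < Cμ)
    (hsupp : μ {z : ℂ | 1 < ‖z‖} = 0)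
    (f : ℂ → ℝ)
    (hdens : μ.restrict {z : ℂ | 1 - ε ≤ ‖z‖ ∧ ‖z‖ ≤ 1} =
      (volume.restrict {z : ℂ | 1 - ε ≤ ‖z‖ ∧ ‖z‖ ≤ 1}).withDensity
        (fun z => ENNReal.ofReal (f z)))
    (hf : ∀ z : ℂ, 1 - ε ≤ ‖z‖ → ‖z‖ ≤ 1 →
      f z ≤ Cμ * (1 - ‖z‖) ^ α / (2 * Real.pi * ‖z‖)) :
    ∃ C > (0 : ℝ),
      (∀ p : ℝ, 0 ≤ p → p < 2 → ∀ z : ℂ, 1 - ε / 2 ≤ ‖z‖ → ‖z‖ ≤ 1 →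
        (∫ x, ‖z - x‖ ^ (-p) ∂μ) ≤ C / (2 - p)) ∧
      (∀ p : ℝ, 0 ≤ p → p < 2 + α → ∀ z : ℂ, ‖z‖ = 1 →
        (∫ x, ‖z - x‖ ^ (-p) ∂μ) ≤ C / ((α + 2) - p)) := by
  set K := Cμ / (2 * (1 - ε))
  set M := (ε / 2) ^ (-(α + 2))
  have hK : 0 ≤ K := div_nonneg hC.le (by linarith)
  have key : ∀ z : ℂ, 1 - ε / 2 ≤ ‖z‖ → ∀ p β : ℝ, 0 ≤ p → p < β → β ≤ α + 2 →
      (∀ ρ, 0 < ρ → μ.restrict {x : ℂ | 1 - ε ≤ ‖x‖ ∧ ‖x‖ ≤ 1} (ball z ρ) ≤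
        ENNReal.ofReal (K * ρ ^ β)) →
      ∫ x, ‖z - x‖ ^ (-p) ∂μ ≤ (α + 2) * (1 + M + K) / (β - p) := by
    intro z hz p β hp hpβ hβ hball
    have hδ : (ε / 2) ^ (-p) ≤ M :=
      Real.rpow_le_rpow_of_exponent_ge (by positivity) (by linarith) (by linarith)
    calc ∫ x, ‖z - x‖ ^ (-p) ∂μ ≤ 1 + (ε / 2) ^ (-p) + K * (p / (β - p)) :=
          integral_rpow_neg_norm_sub_le μ (measurableSet_annulus _ _) z hK (by positivity) hp hpβ
            hball (ae_half_le_norm_sub_of_notMem_edgeAnnulus hsupp hz)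
      _ ≤ 1 + M + K * (p / (β - p)) := by gcongr
      _ ≤ (α + 2) * (1 + M + K) / (β - p) :=
          add_mul_div_sub_le_mul_div_sub (by positivity) hK hp hpβ hβ
  refine ⟨(α + 2) * (1 + M + K), by positivity, ?_, ?_⟩
  · intro p hp hp2 z hz1 hz2
    refine key z hz1 p 2 hp hp2 (by linarith) fun ρ hρ => ?_
    have h := restrict_edgeAnnulus_ball_le hε1 hC.le hdens hf z hρ.le (b := 1) fun x hx =>
      Real.rpow_le_one (by linarith [hx.2.2]) (by linarith [norm_nonneg x]) hα
    rwa [mul_one, ← Real.rpow_natCast] at h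
  · intro p hp hp2 z hz
    refine key z (by linarith) p (α + 2) hp (by linarith) le_rfl fun ρ hρ => ?_
    have h := restrict_edgeAnnulus_ball_le hε1 hC.le hdens hf z hρ.le (b := ρ ^ α) fun x hx =>
      Real.rpow_le_rpow (by linarith [hx.2.2]) (one_sub_norm_lt_of_mem_ball hz hx.1).le hα
    rwa [mul_assoc, ← Real.rpow_natCast, ← Real.rpow_add hρ] at h

/-- Absolute moment bounds for `|z - X|⁻¹` when `X ∼ μ`, a radially symmetric measure
on the unit disk with density bounded by `C_μ (1-r)^α / (2π r)` on the edge annulus,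
`α ≥ 0`: moments up to `2` uniformly on the annulus `A_{ε/2}`, and up to `2 + α` on the
unit circle. -/
theorem inverse_distance_moments_nonneg_alpha (μ : Measure ℂ) [IsProbabilityMeasure μ]
    (ε α Cμ : ℝ) (hε : 0 < ε) (hε1 : ε < 1) (hα : 0 ≤ α) (hC : 0 < Cμ)
    (hsupp : μ {z : ℂ | 1 < ‖z‖} = 0)
    (hsym : ∀ θ : ℝ, μ.map (fun z => Complex.exp (θ * Complex.I) * z) = μ)
    (f : ℂ → ℝ)
    (hdens : μ.restrict {z : ℂ | 1 - ε ≤ ‖z‖ ∧ ‖z‖ ≤ 1} =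
      (volume.restrict {z : ℂ | 1 - ε ≤ ‖z‖ ∧ ‖z‖ ≤ 1}).withDensity
        (fun z => ENNReal.ofReal (f z)))
    (hf : ∀ z : ℂ, 1 - ε ≤ ‖z‖ → ‖z‖ ≤ 1 →
      f z ≤ Cμ * (1 - ‖z‖) ^ α / (2 * Real.pi * ‖z‖)) :
    ∃ C > (0 : ℝ),
      (∀ p : ℝ, 0 ≤ p → p < 2 → ∀ z : ℂ, 1 - ε / 2 ≤ ‖z‖ → ‖z‖ ≤ 1 →
        (∫ x, ‖z - x‖ ^ (-p) ∂μ) ≤ C / (2 - p)) ∧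
      (∀ p : ℝ, 0 ≤ p → p < 2 + α → ∀ z : ℂ, ‖z‖ = 1 →
        (∫ x, ‖z - x‖ ^ (-p) ∂μ) ≤ C / ((α + 2) - p)) :=
  inverse_distance_moments_nonneg_alpha_general μ ε α Cμ hε hε1 hα hC hsupp f hdens hf
end

section
/- Let μ be a radially symmetric probability measure supported on the unit disk whose radial density f_R on {1-ε ≤ |z| ≤ 1} satisfies f_R(r) ≤ C_μ(1-r)^α with -1 < α < 0, and let X ∼ μ. Then for all t > max{2/ε, 1/(1-ε)}, sup_{1-ε/2 ≤ |z| ≤ 1} P(|z - X|^{-1} ≥ t) ≤ (2^{α+2} C_μ / (π (α+1) (1-ε))) · t^{-(2+α)}. -/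
open MeasureTheory Set Metric

open scoped ENNReal

/-!
The event `t ≤ ‖z - X‖⁻¹` is `X ∈ closedBall z t⁻¹`. As `t⁻¹ < ε / 2`, this ball meets the unit
disk only inside the annulus where `μ` has a density, and there the density is at most
`Cμ / (π (1 - ε)) * (1 - ‖x‖²) ^ α`. This weight is radial, so by rotation invariance of Lebesgue
measure we may put `z` on the positive real axis. In coordinates `x = u + i y` the ball lies in the
square of side `2 / t` around `z`, where `|y| ≤ u`, hence
`1 - u² - y² = (√(1 - y²) - u) (√(1 - y²) + u) ≥ √(1 - y²) - u`. So for fixed `y` the `u`-integral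
of the weight is at most that of `(√(1 - y²) - u) ^ α` over an interval of length `2 / t`, which
is at most `(2 / t) ^ (α + 1) / (α + 1)`; the `y`-integral contributes another factor `2 / t`.
-/

lemma Real.rpow_sub_rpow_le_rpow_sub {p c d : ℝ} (hc : 0 ≤ c) (hcd : c ≤ d) (hp0 : 0 ≤ p)
    (hp1 : p ≤ 1) : d ^ p - c ^ p ≤ (d - c) ^ p := by
  have h := NNReal.rpow_add_le_add_rpow ⟨d - c, sub_nonneg.2 hcd⟩ ⟨c, hc⟩ hp0 hp1
  have h' : (d - c + c) ^ p ≤ (d - c) ^ p + c ^ p := by exact_mod_cast h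
  rw [sub_add_cancel] at h'
  linarith

lemma lintegral_Icc_rpow_sub_le {α a m b L : ℝ} (hα : -1 < α) (hα0 : α ≤ 0) (hmb : m ≤ b)
    (hL : m - a ≤ L) :
    ∫⁻ x in Icc a m, ENNReal.ofReal ((b - x) ^ α) ≤ ENNReal.ofReal (L ^ (α + 1) / (α + 1)) := by
  have hα1 : 0 < α + 1 := by linarith
  rcases lt_or_ge m a with ham | ham
  · simp [Icc_eq_empty_of_lt ham]
  have hint : IntervalIntegrable (fun x => (b - x) ^ α) volume a m := by
    simpa using
      (intervalIntegral.intervalIntegrable_rpow' (a := b - a) (b := b - m) hα).comp_sub_left b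
  rw [← restrict_Ioc_eq_restrict_Icc, ← ofReal_integral_eq_lintegral_ofReal hint.1
    ((ae_restrict_iff' measurableSet_Ioc).mpr (.of_forall fun x hx =>
      Real.rpow_nonneg (by linarith [hx.2]) _)), ← intervalIntegral.integral_of_le ham,
    intervalIntegral.integral_comp_sub_left (fun v => v ^ α) b, integral_rpow (Or.inl hα)]
  gcongr
  calc (b - a) ^ (α + 1) - (b - m) ^ (α + 1) ≤ ((b - a) - (b - m)) ^ (α + 1) :=
        Real.rpow_sub_rpow_le_rpow_sub (by linarith) (by linarith) hα1.le (by linarith)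
    _ ≤ L ^ (α + 1) := Real.rpow_le_rpow (by linarith) (by linarith) hα1.le

lemma one_sub_rpow_le_two_mul_one_sub_sq_rpow {α r : ℝ} (hα : -1 ≤ α) (hα0 : α ≤ 0)
    (hr : 0 ≤ r) (hr1 : r ≤ 1) : (1 - r) ^ α ≤ 2 * (1 - r ^ 2) ^ α := by
  have h2 : 1 ≤ 2 * (1 + r) ^ α :=
    calc (1 : ℝ) ≤ 2 ^ (1 + α) := Real.one_le_rpow one_le_two (by linarith)
      _ = 2 * 2 ^ α := by rw [Real.rpow_add two_pos, Real.rpow_one]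
      _ ≤ 2 * (1 + r) ^ α := by
        gcongr 2 * ?_
        exact Real.rpow_le_rpow_of_nonpos (by linarith) (by linarith) hα0
  rw [show 1 - r ^ 2 = (1 - r) * (1 + r) by ring,
    Real.mul_rpow (by linarith) (by linarith)]
  nlinarith [Real.rpow_nonneg (sub_nonneg.2 hr1) α]

lemma one_sub_sq_add_sq_rpow_le {α u y : ℝ} (hα0 : α ≤ 0) (hyu : |y| ≤ u)
    (h1 : u ^ 2 + y ^ 2 ≤ 1) : (1 - (u ^ 2 + y ^ 2)) ^ α ≤ (√(1 - y ^ 2) - u) ^ α := by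
  set b := √(1 - y ^ 2)
  have hb2 : b ^ 2 = 1 - y ^ 2 := Real.sq_sqrt (by nlinarith)
  have hu : 0 ≤ u := (abs_nonneg y).trans hyu
  have hub : u ≤ b := Real.le_sqrt_of_sq_le (by linarith)
  have hbu : 1 ≤ b + u := by nlinarith [sq_abs y, abs_nonneg y]
  rw [show 1 - (u ^ 2 + y ^ 2) = (b - u) * (b + u) by linear_combination -hb2,
    Real.mul_rpow (by linarith) (by linarith)]
  exact mul_le_of_le_one_right (Real.rpow_nonneg (by linarith) _)
    (Real.rpow_le_one_of_one_le_of_nonpos hbu hα0)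

lemma setLIntegral_slice_disk_le {α s δ y : ℝ} (hα : -1 < α) (hα0 : α ≤ 0) (hs : 2 * δ ≤ s)
    (hy : |y| ≤ δ) :
    ∫⁻ x in {x : ℝ | |x - s| ≤ δ ∧ x ^ 2 + y ^ 2 ≤ 1},
        ENNReal.ofReal ((1 - (x ^ 2 + y ^ 2)) ^ α) ≤
      ENNReal.ofReal ((2 * δ) ^ (α + 1) / (α + 1)) := by
  set b := √(1 - y ^ 2)
  have hslice : {x : ℝ | |x - s| ≤ δ ∧ x ^ 2 + y ^ 2 ≤ 1} ⊆ Icc (s - δ) (min b (s + δ)) :=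
    fun x ⟨hxs, hx1⟩ => ⟨by linarith [(abs_le.1 hxs).1],
      le_min (Real.le_sqrt_of_sq_le (by linarith)) (by linarith [(abs_le.1 hxs).2])⟩
  calc ∫⁻ x in {x : ℝ | |x - s| ≤ δ ∧ x ^ 2 + y ^ 2 ≤ 1},
        ENNReal.ofReal ((1 - (x ^ 2 + y ^ 2)) ^ α)
      ≤ ∫⁻ x in {x : ℝ | |x - s| ≤ δ ∧ x ^ 2 + y ^ 2 ≤ 1}, ENNReal.ofReal ((b - x) ^ α) :=
        setLIntegral_mono (by fun_prop) fun x ⟨hxs, hx1⟩ => ENNReal.ofReal_le_ofReal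
          (one_sub_sq_add_sq_rpow_le hα0 (by linarith [(abs_le.1 hxs).1]) hx1)
    _ ≤ ∫⁻ x in Icc (s - δ) (min b (s + δ)), ENNReal.ofReal ((b - x) ^ α) :=
        lintegral_mono_set hslice
    _ ≤ ENNReal.ofReal ((2 * δ) ^ (α + 1) / (α + 1)) :=
        lintegral_Icc_rpow_sub_le hα hα0 (min_le_left _ _) (by linarith [min_le_right b (s + δ)])

lemma setLIntegral_rect_inter_disk_le {α s δ : ℝ} (hα : -1 < α) (hα0 : α ≤ 0) (hδ : 0 ≤ δ)
    (hs : 2 * δ ≤ s) :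
    ∫⁻ p in {p : ℝ × ℝ | |p.1 - s| ≤ δ ∧ |p.2| ≤ δ ∧ p.1 ^ 2 + p.2 ^ 2 ≤ 1},
        ENNReal.ofReal ((1 - (p.1 ^ 2 + p.2 ^ 2)) ^ α) ≤
      ENNReal.ofReal ((2 * δ) ^ (α + 2) / (α + 1)) := by
  set T := {p : ℝ × ℝ | |p.1 - s| ≤ δ ∧ |p.2| ≤ δ ∧ p.1 ^ 2 + p.2 ^ 2 ≤ 1}
  set g : ℝ × ℝ → ℝ≥0∞ := fun p => ENNReal.ofReal ((1 - (p.1 ^ 2 + p.2 ^ 2)) ^ α)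
  set K := ENNReal.ofReal ((2 * δ) ^ (α + 1) / (α + 1))
  have hT : MeasurableSet T := by measurability
  have hinner : ∀ y, ∫⁻ x, T.indicator g (x, y) ≤ (Icc (-δ) δ).indicator (fun _ => K) y := by
    intro y
    by_cases hy : |y| ≤ δ
    · rw [indicator_of_mem (show y ∈ Icc (-δ) δ from abs_le.1 hy)]
      refine le_of_eq_of_le ?_ (setLIntegral_slice_disk_le hα hα0 hs hy)
      rw [← lintegral_indicator (by measurability)]
      refine lintegral_congr fun x => ?_
      simp only [indicator_apply, T, g, mem_ofPred_eq, hy, true_and]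
    · have hT : ∀ x, (x, y) ∉ T := fun x hx => hy hx.2.1
      simp [hT]
  calc ∫⁻ p in T, g p = ∫⁻ y, ∫⁻ x, T.indicator g (x, y) := by
        rw [← lintegral_indicator hT, Measure.volume_eq_prod,
          lintegral_prod_symm _ ((by fun_prop : Measurable g).indicator hT).aemeasurable]
    _ ≤ ∫⁻ y, (Icc (-δ) δ).indicator (fun _ => K) y := lintegral_mono hinner
    _ = K * ENNReal.ofReal (2 * δ) := by
        rw [lintegral_indicator_const measurableSet_Icc, Real.volume_Icc]
        ring_nf
    _ = ENNReal.ofReal ((2 * δ) ^ (α + 2) / (α + 1)) := by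
        have h2δ : (2 * δ) ^ (α + 2) = (2 * δ) ^ (α + 1) * (2 * δ) := by
          rw [← Real.rpow_add_one' (by positivity) (by linarith)]
          ring_nf
        rw [← ENNReal.ofReal_mul' (by positivity), h2δ]
        congr 1
        ring

lemma setLIntegral_closedBall_inter_closedBall_le {α δ : ℝ} {z : ℂ} (hα : -1 < α)
    (hα0 : α ≤ 0) (hδ : 0 ≤ δ) (hz : 2 * δ ≤ ‖z‖) :
    ∫⁻ x in closedBall z δ ∩ closedBall 0 1, ENNReal.ofReal ((1 - ‖x‖ ^ 2) ^ α) ≤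
      ENNReal.ofReal ((2 * δ) ^ (α + 2) / (α + 1)) := by
  set ρ := rotation (Circle.exp z.arg)
  have hρz : ρ ‖z‖ = z := by
    rw [rotation_apply, Circle.coe_exp, mul_comm]
    exact Complex.norm_mul_exp_arg_mul_I z
  have himage : ρ '' (closedBall (‖z‖ : ℂ) δ ∩ closedBall 0 1) =
      closedBall z δ ∩ closedBall 0 1 := by
    rw [image_inter ρ.injective, ρ.image_closedBall, ρ.image_closedBall, hρz, map_zero]
  rw [← himage, ← ρ.measurePreserving.setLIntegral_comp_emb ρ.toHomeomorph.measurableEmbedding]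
  simp only [LinearIsometryEquiv.norm_map]
  have hnorm : ∀ x : ℂ, ‖x‖ ^ 2 = x.re ^ 2 + x.im ^ 2 := fun x => by
    rw [Complex.sq_norm, Complex.normSq_apply]
    ring
  set T := {p : ℝ × ℝ | |p.1 - ‖z‖| ≤ δ ∧ |p.2| ≤ δ ∧ p.1 ^ 2 + p.2 ^ 2 ≤ 1}
  have hsub : closedBall (‖z‖ : ℂ) δ ∩ closedBall 0 1 ⊆ Complex.measurableEquivRealProd ⁻¹' T := by
    rintro x ⟨hxz, hx1⟩
    rw [mem_closedBall, dist_eq_norm] at hxz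
    rw [mem_closedBall, dist_zero_right] at hx1
    refine ⟨?_, ?_, ?_⟩
    · simpa using (Complex.abs_re_le_norm _).trans hxz
    · simpa using (Complex.abs_im_le_norm _).trans hxz
    · simpa [hnorm] using pow_le_one₀ (norm_nonneg x) hx1 (n := 2)
  calc ∫⁻ x in closedBall (‖z‖ : ℂ) δ ∩ closedBall 0 1, ENNReal.ofReal ((1 - ‖x‖ ^ 2) ^ α)
      ≤ ∫⁻ x in Complex.measurableEquivRealProd ⁻¹' T, ENNReal.ofReal ((1 - ‖x‖ ^ 2) ^ α) :=
        lintegral_mono_set hsub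
    _ = ∫⁻ p in T, ENNReal.ofReal ((1 - (p.1 ^ 2 + p.2 ^ 2)) ^ α) := by
        rw [← Complex.volume_preserving_equiv_real_prod.setLIntegral_comp_preimage
          (by measurability) (by fun_prop)]
        simp only [hnorm, Complex.measurableEquivRealProd_apply]
    _ ≤ ENNReal.ofReal ((2 * δ) ^ (α + 2) / (α + 1)) :=
        setLIntegral_rect_inter_disk_le hα hα0 hδ hz

lemma mul_one_sub_rpow_div_le {Cμ ε α r : ℝ} (hC : 0 ≤ Cμ) (hα : -1 ≤ α) (hα0 : α ≤ 0)
    (hε : 0 < 1 - ε) (hr : 1 - ε ≤ r) (hr1 : r ≤ 1) :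
    Cμ * (1 - r) ^ α / (2 * Real.pi * r) ≤ Cμ / (Real.pi * (1 - ε)) * (1 - r ^ 2) ^ α := by
  have h1r : 0 ≤ (1 - r) ^ α := Real.rpow_nonneg (by linarith) α
  calc Cμ * (1 - r) ^ α / (2 * Real.pi * r) ≤ Cμ * (1 - r) ^ α / (2 * Real.pi * (1 - ε)) := by
        gcongr
    _ ≤ Cμ * (2 * (1 - r ^ 2) ^ α) / (2 * Real.pi * (1 - ε)) := by
        gcongr
        exact one_sub_rpow_le_two_mul_one_sub_sq_rpow hα hα0 (by linarith) hr1
    _ = Cμ / (Real.pi * (1 - ε)) * (1 - r ^ 2) ^ α := by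
        field_simp

lemma measure_eq_setLIntegral_of_restrict_eq_withDensity {X : Type*} [MeasurableSpace X]
    {μ ν : Measure X} {A B : Set X} {g : X → ℝ≥0∞}
    (h : μ.restrict A = (ν.restrict A).withDensity g) (hB : MeasurableSet B) (hBA : B ⊆ A) :
    μ B = ∫⁻ x in B, g x ∂ν := by
  rw [← inter_eq_left.2 hBA, ← Measure.restrict_apply hB, h, withDensity_apply _ hB,
    Measure.restrict_restrict hB]

lemma measure_closedBall_le_of_density_le (μ : Measure ℂ) (f : ℂ → ℝ) {ε α Cμ δ : ℝ} {z : ℂ}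
    (hε1 : ε < 1) (hα : -1 < α) (hα0 : α ≤ 0) (hC : 0 ≤ Cμ)
    (hsupp : μ {z : ℂ | 1 < ‖z‖} = 0)
    (hdens : μ.restrict {z : ℂ | 1 - ε ≤ ‖z‖ ∧ ‖z‖ ≤ 1} =
      (volume.restrict {z : ℂ | 1 - ε ≤ ‖z‖ ∧ ‖z‖ ≤ 1}).withDensity
        (fun z => ENNReal.ofReal (f z)))
    (hf : ∀ z : ℂ, 1 - ε ≤ ‖z‖ → ‖z‖ ≤ 1 →
      f z ≤ Cμ * (1 - ‖z‖) ^ α / (2 * Real.pi * ‖z‖))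
    (hδ : 0 ≤ δ) (hzδ : 2 * δ ≤ ‖z‖) (hzε : 1 - ε ≤ ‖z‖ - δ) :
    μ (closedBall z δ) ≤
      ENNReal.ofReal (Cμ / (Real.pi * (1 - ε)) * ((2 * δ) ^ (α + 2) / (α + 1))) := by
  set c := Cμ / (Real.pi * (1 - ε))
  set B := closedBall z δ ∩ closedBall 0 1
  have hBA : B ⊆ {x : ℂ | 1 - ε ≤ ‖x‖ ∧ ‖x‖ ≤ 1} := by
    rintro x ⟨hxz, hx1⟩
    rw [mem_closedBall, dist_eq_norm] at hxz
    rw [mem_closedBall, dist_zero_right] at hx1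
    exact ⟨by linarith [norm_sub_norm_le z x, norm_sub_rev x z], hx1⟩
  have hdisk : μ (closedBall (0 : ℂ) 1)ᶜ = 0 := by
    convert hsupp using 2
    ext x
    simp
  calc μ (closedBall z δ) = μ B := (measure_inter_conull hdisk).symm
    _ = ∫⁻ x in B, ENNReal.ofReal (f x) :=
        measure_eq_setLIntegral_of_restrict_eq_withDensity hdens
          (measurableSet_closedBall.inter measurableSet_closedBall) hBA
    _ ≤ ∫⁻ x in B, ENNReal.ofReal c * ENNReal.ofReal ((1 - ‖x‖ ^ 2) ^ α) := by
        refine setLIntegral_mono (by fun_prop) fun x hx => ?_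
        obtain ⟨hx, hx1⟩ := hBA hx
        rw [← ENNReal.ofReal_mul (by positivity)]
        exact ENNReal.ofReal_le_ofReal ((hf x hx hx1).trans
          (mul_one_sub_rpow_div_le hC hα.le hα0 (by linarith) hx hx1))
    _ = ENNReal.ofReal c * ∫⁻ x in B, ENNReal.ofReal ((1 - ‖x‖ ^ 2) ^ α) :=
        lintegral_const_mul _ (by fun_prop)
    _ ≤ ENNReal.ofReal c * ENNReal.ofReal ((2 * δ) ^ (α + 2) / (α + 1)) := by
        gcongr
        exact setLIntegral_closedBall_inter_closedBall_le hα hα0 hδ hzδ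
    _ = ENNReal.ofReal (c * ((2 * δ) ^ (α + 2) / (α + 1))) :=
        (ENNReal.ofReal_mul (by positivity)).symm

lemma setOf_le_inv_norm_sub_subset_closedBall {t : ℝ} (ht : 0 < t) (z : ℂ) :
    {x : ℂ | t ≤ ‖z - x‖⁻¹} ⊆ closedBall z t⁻¹ := by
  intro x (hx : t ≤ ‖z - x‖⁻¹)
  have hpos : 0 < ‖z - x‖ := by
    refine (norm_nonneg _).lt_of_ne fun h => ?_
    rw [← h, inv_zero] at hx
    linarith
  rw [mem_closedBall, dist_comm, dist_eq_norm]
  exact (le_inv_comm₀ ht hpos).1 hx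

theorem inverse_distance_tail_negative_alpha_general (μ : Measure ℂ)
    (ε α Cμ : ℝ) (hε : 0 < ε) (hε1 : ε < 1) (hα : -1 < α) (hα0 : α < 0) (hC : 0 < Cμ)
    (hsupp : μ {z : ℂ | 1 < ‖z‖} = 0)
    (f : ℂ → ℝ)
    (hdens : μ.restrict {z : ℂ | 1 - ε ≤ ‖z‖ ∧ ‖z‖ ≤ 1} =
      (volume.restrict {z : ℂ | 1 - ε ≤ ‖z‖ ∧ ‖z‖ ≤ 1}).withDensity
        (fun z => ENNReal.ofReal (f z)))
    (hf : ∀ z : ℂ, 1 - ε ≤ ‖z‖ → ‖z‖ ≤ 1 →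
      f z ≤ Cμ * (1 - ‖z‖) ^ α / (2 * Real.pi * ‖z‖)) :
    ∀ t : ℝ, max (2 / ε) (1 / (1 - ε)) < t →
      ∀ z : ℂ, 1 - ε / 2 ≤ ‖z‖ → ‖z‖ ≤ 1 →
        (μ {x : ℂ | t ≤ ‖z - x‖⁻¹}).toReal ≤
          (2 : ℝ) ^ (α + 2) * Cμ / (Real.pi * (α + 1) * (1 - ε)) * t ^ (-(2 + α)) := by
  intro t ht z hz _
  obtain ⟨htε, htε1⟩ := max_lt_iff.1 ht
  have hε1' : 0 < 1 - ε := by linarith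
  have ht0 : 0 < t := (by positivity : (0 : ℝ) < 2 / ε).trans htε
  have hδε : t⁻¹ < ε / 2 := by rwa [inv_lt_comm₀ ht0 (by positivity), inv_div]
  have hδε1 : t⁻¹ < 1 - ε := by rwa [inv_lt_comm₀ ht0 hε1', ← one_div]
  have hμ := (measure_mono (setOf_le_inv_norm_sub_subset_closedBall ht0 z)).trans
    (measure_closedBall_le_of_density_le μ f hε1 hα hα0.le hC.le hsupp hdens hf
      (inv_nonneg.2 ht0.le) (by linarith) (by linarith))
  have hα1 : 0 < α + 1 := by linarith
  refine (ENNReal.toReal_le_of_le_ofReal (by positivity) hμ).trans_eq ?_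
  rw [Real.mul_rpow zero_le_two (inv_nonneg.2 ht0.le), Real.inv_rpow ht0.le,
    ← Real.rpow_neg ht0.le, add_comm 2 α]
  field_simp

/-- Heavy-tail bound for `|z - X|⁻¹` when `X ∼ μ` with `-1 < α < 0`:
uniformly over `z` in the annulus `A_{ε/2}`, the tail at level `t` is at most
`(2^{α+2} C_μ / (π (α+1)(1-ε))) t^{-(2+α)}`. -/
theorem inverse_distance_tail_negative_alpha (μ : Measure ℂ) [IsProbabilityMeasure μ]
    (ε α Cμ : ℝ) (hε : 0 < ε) (hε1 : ε < 1) (hα : -1 < α) (hα0 : α < 0) (hC : 0 < Cμ)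
    (hsupp : μ {z : ℂ | 1 < ‖z‖} = 0)
    (hsym : ∀ θ : ℝ, μ.map (fun z => Complex.exp (θ * Complex.I) * z) = μ)
    (f : ℂ → ℝ)
    (hdens : μ.restrict {z : ℂ | 1 - ε ≤ ‖z‖ ∧ ‖z‖ ≤ 1} =
      (volume.restrict {z : ℂ | 1 - ε ≤ ‖z‖ ∧ ‖z‖ ≤ 1}).withDensity
        (fun z => ENNReal.ofReal (f z)))
    (hf : ∀ z : ℂ, 1 - ε ≤ ‖z‖ → ‖z‖ ≤ 1 →
      f z ≤ Cμ * (1 - ‖z‖) ^ α / (2 * Real.pi * ‖z‖)) :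
    ∀ t : ℝ, max (2 / ε) (1 / (1 - ε)) < t →
      ∀ z : ℂ, 1 - ε / 2 ≤ ‖z‖ → ‖z‖ ≤ 1 →
        (μ {x : ℂ | t ≤ ‖z - x‖⁻¹}).toReal ≤
          (2 : ℝ) ^ (α + 2) * Cμ / (Real.pi * (α + 1) * (1 - ε)) * t ^ (-(2 + α)) :=
  inverse_distance_tail_negative_alpha_general μ ε α Cμ hε hε1 hα hα0 hC hsupp f hdens hf
end

section
/- Let μ be a radially symmetric probability measure on the unit disk with radial c.d.f. F_R satisfying F_R(r) ≤ 1 - (c_μ/(α+1))(1-r)^{α+1} and 1 - F_R(r) ≤ (C_μ/(α+1))(1-r)^{α+1} for r ∈ [1-ε, 1], where α > -1. Let X_1, …, X_n be i.i.d. ∼ μ and let X^↑_{(n-l+1)} denote the (n-l+1)-th smallest in modulus. If γ_n ∈ (0, ε) satisfies n γ_n^{α+1} → ∞ and γ_n → 0, and l_n = o(n) satisfies l_n · log(n γ_n^{α+1}) = o(n γ_n^{α+1}), then there is c > 0 such that P(|X^↑_{(n-l_n+1)}| ≤ 1 - γ_n) = O(exp(-c n γ_n^{α+1})). -/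
/-!
A sample lands in the annulus `1 - γₙ < |z|` with probability at least
`qₙ := c_μ γₙ^{α+1} / (α+1)`, by the upper bound on `F_R` at `r = 1 - γₙ`. The number of such
samples among `n` is a sum of `n` independent indicators, so the exponential Chernoff bound at
`t = 1` gives `P(count ≤ lₙ) ≤ exp (lₙ - (1 - e⁻¹) n qₙ)`. Once `n γₙ^{α+1} ≥ e` the logarithm
in `lₙ log (n γₙ^{α+1}) = o(n γₙ^{α+1})` is at least `1`, so `lₙ` is eventually at most half
of `(1 - e⁻¹) n qₙ`, which leaves `exp (-c n γₙ^{α+1})`.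
-/

open MeasureTheory ProbabilityTheory Filter Asymptotics

open Real Finset

section IndependentEvents

variable {Ω ι : Type*} [MeasurableSpace Ω] {P : Measure Ω}

theorem ProbabilityTheory.iIndepFun.iIndepSet_preimage {E : Type*} [MeasurableSpace E]
    {X : ι → Ω → E} (hX : iIndepFun X P) {B : ι → Set E} (hB : ∀ i, MeasurableSet (B i)) :
    iIndepSet (fun i => X i ⁻¹' B i) P :=
  (iIndepSet_iff_iIndep _ _).2 <| iIndep_of_iIndep_of_le hX fun i =>
    MeasurableSpace.generateFrom_le fun _ hs => hs ▸ ⟨B i, hB i, rfl⟩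

variable [IsProbabilityMeasure P]

theorem mgf_indicator_one {A : Set Ω} (hA : MeasurableSet A) (t : ℝ) :
    mgf (A.indicator 1) P t = 1 + (exp t - 1) * P.real A := by
  have hexp : (fun ω => exp (t * A.indicator 1 ω)) =
      fun ω => A.indicator (fun _ => exp t - 1) ω + 1 := by
    funext ω
    by_cases h : ω ∈ A <;> simp [h]
  rw [mgf, hexp, integral_add ((integrable_const _).indicator hA) (integrable_const 1),
    integral_indicator_const _ hA]
  simp only [integral_const, probReal_univ, smul_eq_mul, one_mul]
  ring

theorem mgf_indicator_one_le_exp {A : Set Ω} (hA : MeasurableSet A) (t : ℝ) :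
    mgf (A.indicator 1) P t ≤ exp ((exp t - 1) * P.real A) := by
  rw [mgf_indicator_one hA, add_comm]
  exact add_one_le_exp _

open Classical in
theorem measureReal_card_le_le_exp {A : ι → Set Ω} (hA : ∀ i, MeasurableSet (A i))
    (hindep : iIndepSet A P) {q : ℝ} (hq : ∀ i, q ≤ P.real (A i)) (s : Finset ι) (k : ℝ)
    {t : ℝ} (ht : 0 ≤ t) :
    P.real {ω | (#{i ∈ s | ω ∈ A i} : ℝ) ≤ k} ≤ exp (t * k - (1 - exp (-t)) * q * #s) := by
  set S : Ω → ℝ := ∑ i ∈ s, (A i).indicator 1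
  have hS : ∀ ω, S ω = #{i ∈ s | ω ∈ A i} := fun ω => by
    simp [S, Finset.sum_apply, Set.indicator_apply]
  have hY : ∀ i, Measurable ((A i).indicator (1 : Ω → ℝ)) := fun i =>
    measurable_const.indicator (hA i)
  have hSint : Integrable (fun ω => exp (-t * S ω)) P := by
    refine integrable_exp_mul_of_mem_Icc (a := 0) (b := #s)
      (Finset.aemeasurable_sum _ fun i _ => (hY i).aemeasurable) (ae_of_all _ fun ω => ?_)
    rw [hS]
    exact ⟨by positivity, by exact_mod_cast card_filter_le _ _⟩
  have hmgf : mgf S P (-t) ≤ exp (-((1 - exp (-t)) * q * #s)) := calc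
    mgf S P (-t) = ∏ i ∈ s, mgf ((A i).indicator 1) P (-t) :=
      hindep.iIndepFun_indicator.mgf_sum hY _
    _ ≤ ∏ _i ∈ s, exp (-((1 - exp (-t)) * q)) := by
      refine prod_le_prod (fun i _ => mgf_nonneg) fun i _ => ?_
      refine (mgf_indicator_one_le_exp (hA i) _).trans (exp_le_exp.2 ?_)
      have hcoef : 0 ≤ 1 - exp (-t) := by simp [exp_le_one_iff, ht]
      nlinarith [hq i, hcoef]
    _ = exp (-((1 - exp (-t)) * q * #s)) := by
      rw [prod_const, ← exp_nat_mul]; ring_nf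
  calc P.real {ω | (#{i ∈ s | ω ∈ A i} : ℝ) ≤ k} = P.real {ω | S ω ≤ k} := by simp only [hS]
    _ ≤ exp (- -t * k) * mgf S P (-t) := measure_le_le_exp_mul_mgf k (by linarith) hSint
    _ ≤ exp (t * k) * exp (-((1 - exp (-t)) * q * #s)) := by
      rw [neg_neg]; gcongr
    _ = exp (t * k - (1 - exp (-t)) * q * #s) := by rw [← exp_add]; ring_nf

end IndependentEvents

theorem eventually_le_mul_of_isLittleO_mul_log {ι : Type*} {L : Filter ι} {f l : ι → ℝ}
    (hf : Tendsto f L atTop) (hl : (fun i => l i * log (f i)) =o[L] f) (hl0 : ∀ i, 0 ≤ l i)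
    {δ : ℝ} (hδ : 0 < δ) : ∀ᶠ i in L, l i ≤ δ * f i := by
  filter_upwards [hl.def hδ, hf.eventually_ge_atTop (exp 1)] with i hlog hfi
  have hf0 : 0 < f i := (exp_pos 1).trans_le hfi
  have hlog1 : 1 ≤ log (f i) := by simpa using log_le_log (exp_pos 1) hfi
  calc l i ≤ l i * log (f i) := le_mul_of_one_le_right (hl0 i) hlog1
    _ ≤ ‖l i * log (f i)‖ := le_norm_self _
    _ ≤ δ * ‖f i‖ := hlog
    _ = δ * f i := by rw [norm_of_nonneg hf0.le]

theorem le_measureReal_norm_gt {E : Type*} [NormedAddCommGroup E] [MeasurableSpace E]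
    [OpensMeasurableSpace E] {μ : Measure E} [IsProbabilityMeasure μ] {r q : ℝ}
    (h : μ.real {z | ‖z‖ ≤ r} ≤ 1 - q) : q ≤ μ.real {z | r < ‖z‖} := by
  have hcompl : {z : E | r < ‖z‖} = {z | ‖z‖ ≤ r}ᶜ := by ext; simp
  rw [hcompl, probReal_compl_eq_one_sub (measurableSet_le measurable_norm measurable_const)]
  linarith

open Classical in
/-- The order-statistic event `|X^↑_{(n-l_n+1)}| ≤ 1 - γ_n` is encoded as
`#{i < n : |X_i| > 1 - γ_n} < l_n`. -/
theorem largest_roots_near_circle_general {Ω : Type*} [MeasurableSpace Ω]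
    (P : Measure Ω) [IsProbabilityMeasure P]
    (μ : Measure ℂ) [IsProbabilityMeasure μ]
    (ε α cμ : ℝ) (hα : -1 < α)
    (hc : 0 < cμ)
    (F : ℝ → ℝ) (hF : ∀ r, F r = (μ {z : ℂ | ‖z‖ ≤ r}).toReal)
    (hFub : ∀ r, 1 - ε ≤ r → r ≤ 1 → F r ≤ 1 - cμ / (α + 1) * (1 - r) ^ (α + 1))
    (X : ℕ → Ω → ℂ) (hmeas : ∀ i, Measurable (X i))
    (hindep : iIndepFun X P)
    (hid : ∀ i, P.map (X i) = μ)
    (γ : ℕ → ℝ) (hγ : ∀ n, 0 < γ n ∧ γ n < ε)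
    (hnγ : Tendsto (fun n : ℕ => (n : ℝ) * γ n ^ (α + 1)) atTop atTop)
    (l : ℕ → ℕ)
    (hllog : (fun n => (l n : ℝ) * Real.log ((n : ℝ) * γ n ^ (α + 1))) =o[atTop]
      (fun n => (n : ℝ) * γ n ^ (α + 1))) :
    ∃ c > (0 : ℝ), ∃ C > (0 : ℝ), ∀ᶠ n in atTop,
      (P {ω | ((Finset.range n).filter fun i => 1 - γ n < ‖X i ω‖).card < l n}).toReal ≤
        C * Real.exp (-c * (n : ℝ) * γ n ^ (α + 1)) := by
  set a := (1 - exp (-1)) * (cμ / (α + 1))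
  have ha : 0 < a := mul_pos (by simp) (div_pos hc (by linarith))
  refine ⟨a / 2, half_pos ha, 1, one_pos, ?_⟩
  filter_upwards [eventually_le_mul_of_isLittleO_mul_log hnγ hllog (fun n => (l n).cast_nonneg)
    (half_pos ha)] with n hln
  set B := {z : ℂ | 1 - γ n < ‖z‖}
  have hB : MeasurableSet B := measurableSet_lt measurable_const measurable_norm
  have hq : ∀ i, cμ / (α + 1) * γ n ^ (α + 1) ≤ P.real (X i ⁻¹' B) := fun i => by
    rw [← map_measureReal_apply (hmeas i) hB, hid i]
    refine le_measureReal_norm_gt ?_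
    have := hFub (1 - γ n) (by linarith [hγ n]) (by linarith [hγ n])
    rwa [hF, sub_sub_cancel] at this
  calc P.real {ω | #{i ∈ range n | 1 - γ n < ‖X i ω‖} < l n}
      ≤ P.real {ω | (#{i ∈ range n | ω ∈ X i ⁻¹' B} : ℝ) ≤ l n} :=
        measureReal_mono fun ω hω => by simpa [B] using hω.le
    _ ≤ exp (1 * l n - (1 - exp (-1)) * (cμ / (α + 1) * γ n ^ (α + 1)) * #(range n)) :=
        measureReal_card_le_le_exp (fun i => hmeas i hB) (hindep.iIndepSet_preimage fun _ => hB)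
          hq _ _ zero_le_one
    _ ≤ 1 * exp (-(a / 2) * n * γ n ^ (α + 1)) := by
      rw [card_range, one_mul, one_mul, exp_le_exp]
      linarith

open Classical in
/-- The `l_n` largest-modulus samples among `n` i.i.d. draws from `μ` all lie within
distance `γ_n` of the unit circle with probability `1 - O(exp(-c n γ_n^{α+1}))`.
The order-statistic event `|X^↑_{(n-l_n+1)}| ≤ 1 - γ_n` is encoded as
`#{i < n : |X_i| > 1 - γ_n} < l_n`. -/
theorem largest_roots_near_circle {Ω : Type*} [MeasurableSpace Ω]
    (P : Measure Ω) [IsProbabilityMeasure P]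
    (μ : Measure ℂ) [IsProbabilityMeasure μ]
    (ε α cμ Cμ : ℝ) (hε : 0 < ε) (hε1 : ε ≤ 1) (hα : -1 < α)
    (hc : 0 < cμ) (hCμ : 0 < Cμ)
    (hsupp : μ {z : ℂ | 1 < ‖z‖} = 0)
    (hsym : ∀ θ : ℝ, μ.map (fun z => Complex.exp (θ * Complex.I) * z) = μ)
    (F : ℝ → ℝ) (hF : ∀ r, F r = (μ {z : ℂ | ‖z‖ ≤ r}).toReal)
    (hFub : ∀ r, 1 - ε ≤ r → r ≤ 1 → F r ≤ 1 - cμ / (α + 1) * (1 - r) ^ (α + 1))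
    (hFlb : ∀ r, 1 - ε ≤ r → r ≤ 1 → 1 - F r ≤ Cμ / (α + 1) * (1 - r) ^ (α + 1))
    (X : ℕ → Ω → ℂ) (hmeas : ∀ i, Measurable (X i))
    (hindep : iIndepFun X P)
    (hid : ∀ i, P.map (X i) = μ)
    (γ : ℕ → ℝ) (hγ : ∀ n, 0 < γ n ∧ γ n < ε)
    (hγ0 : Tendsto γ atTop (nhds 0))
    (hnγ : Tendsto (fun n : ℕ => (n : ℝ) * γ n ^ (α + 1)) atTop atTop)
    (l : ℕ → ℕ)
    (hl : (fun n => (l n : ℝ)) =o[atTop] (fun n => (n : ℝ)))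
    (hllog : (fun n => (l n : ℝ) * Real.log ((n : ℝ) * γ n ^ (α + 1))) =o[atTop]
      (fun n => (n : ℝ) * γ n ^ (α + 1))) :
    ∃ c > (0 : ℝ), ∃ C > (0 : ℝ), ∀ᶠ n in atTop,
      (P {ω | ((Finset.range n).filter fun i => 1 - γ n < ‖X i ω‖).card < l n}).toReal ≤
        C * Real.exp (-c * (n : ℝ) * γ n ^ (α + 1)) :=
  largest_roots_near_circle_general P μ ε α cμ hα hc F hF hFub X hmeas hindep hid γ hγ hnγ l hllog
end

section
/- Let 0 < r₁ < r₂ and ε ∈ (0, r₂/2). Then the closed annulus A = {z ∈ ℂ : r₁ ≤ |z| ≤ r₂} admits a finite set N ⊆ A such that: (1) every point of A is within distance ε of some point of N; (2) any two distinct points of N are at distance greater than ε r₁/(2 r₂); and (3) |N| ≤ 22 ε^{-2} r₂ (r₂ - r₁) if ε ≤ r₂ - r₁, and |N| ≤ 18 ε^{-1} r₂ if r₂ - r₁ < ε < r₂/2. -/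
open Metric MeasureTheory Real Set
open scoped ENNReal NNReal

set_option maxHeartbeats 2000000 in
/-- Existence of a separated `ε`-net for the annulus `{r₁ ≤ |z| ≤ r₂}` with cardinality
bounds. -/
theorem annulus_eps_net (r₁ r₂ ε : ℝ) (h1 : 0 < r₁) (h12 : r₁ < r₂)
    (hε : 0 < ε) (hε2 : ε < r₂ / 2) :
    ∃ N : Finset ℂ,
      (↑N ⊆ {z : ℂ | r₁ ≤ ‖z‖ ∧ ‖z‖ ≤ r₂}) ∧
      (∀ z : ℂ, r₁ ≤ ‖z‖ → ‖z‖ ≤ r₂ → ∃ w ∈ N, ‖z - w‖ < ε) ∧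
      (∀ w₁ ∈ N, ∀ w₂ ∈ N, w₁ ≠ w₂ → ε * r₁ / (2 * r₂) < ‖w₁ - w₂‖) ∧
      (ε ≤ r₂ - r₁ → (N.card : ℝ) ≤ 22 * ε⁻¹ ^ 2 * r₂ * (r₂ - r₁)) ∧
      (r₂ - r₁ < ε → (N.card : ℝ) ≤ 18 * ε⁻¹ * r₂) := by
  classical
  set s : ℝ := 19 * ε / 20 with hs_def
  have hs : 0 < s := by positivity
  have hδ : (0:ℝ) < ε / 20 := by positivity
  set A : Set ℂ := {z : ℂ | r₁ ≤ ‖z‖ ∧ ‖z‖ ≤ r₂} with hA_def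
  -- A is compact
  have hAclosed : IsClosed A := by
    have : A = (fun z : ℂ => ‖z‖) ⁻¹' (Set.Icc r₁ r₂) := by
      ext z; simp [hA_def, Set.mem_Icc]
    rw [this]
    exact isClosed_Icc.preimage continuous_norm
  have hAcompact : IsCompact A := by
    refine IsCompact.of_isClosed_subset (isCompact_closedBall (0:ℂ) r₂) hAclosed ?_
    intro z hz
    simpa [Metric.mem_closedBall] using hz.2
  obtain ⟨T₀, hT₀A, hT₀fin, hcover⟩ := hAcompact.finite_cover_balls hδ
  set T : Finset ℂ := hT₀fin.toFinset with hT_def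
  have hTA : ∀ t ∈ T, (t : ℂ) ∈ A := by
    intro t ht
    exact hT₀A (hT₀fin.mem_toFinset.mp ht)
  -- separated subsets of T
  set sep : Finset ℂ → Prop := fun F => ∀ w₁ ∈ F, ∀ w₂ ∈ F, w₁ ≠ w₂ → s ≤ dist w₁ w₂
    with hsep_def
  set C : Finset (Finset ℂ) := T.powerset.filter sep with hC_def
  have hCne : C.Nonempty := by
    refine ⟨∅, ?_⟩
    simp [hC_def, hsep_def]
  obtain ⟨N, hNC, hNmax⟩ := C.exists_max_image Finset.card hCne
  have hNT : N ⊆ T := Finset.mem_powerset.mp (Finset.mem_filter.mp hNC).1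
  have hNsep : ∀ w₁ ∈ N, ∀ w₂ ∈ N, w₁ ≠ w₂ → s ≤ dist w₁ w₂ :=
    (Finset.mem_filter.mp hNC).2
  have hNA : (↑N : Set ℂ) ⊆ A := by
    intro w hw
    exact hTA w (hNT hw)
  -- maximality: every t ∈ T is within s of N
  have hmax : ∀ t ∈ T, ∃ w ∈ N, dist t w < s := by
    intro t ht
    by_contra hcon
    push_neg at hcon
    have htN : t ∉ N := by
      intro htN
      have := hcon t htN
      simp at this
      linarith
    have hins : insert t N ∈ C := by
      rw [hC_def, Finset.mem_filter, Finset.mem_powerset]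
      constructor
      · exact Finset.insert_subset ht hNT
      · intro w₁ hw₁ w₂ hw₂ hne
        rcases Finset.mem_insert.mp hw₁ with h₁ | h₁ <;>
          rcases Finset.mem_insert.mp hw₂ with h₂ | h₂
        · exact absurd (h₁.trans h₂.symm) hne
        · subst h₁; exact hcon w₂ h₂
        · subst h₂; rw [dist_comm]; exact hcon w₁ h₁
        · exact hNsep w₁ h₁ w₂ h₂ hne
    have := hNmax _ hins
    rw [Finset.card_insert_of_notMem htN] at this
    omega
  -- cardinality bound, common part
  have hdisj : (↑N : Set ℂ).PairwiseDisjoint (fun w => Metric.ball w (s/2)) := by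
    intro w₁ hw₁ w₂ hw₂ hne
    exact Metric.ball_disjoint_ball (by
      have := hNsep w₁ hw₁ w₂ hw₂ hne; linarith)
  set R : ℝ := r₂ + s / 2 with hR_def
  set m : ℝ := max (r₁ - s / 2) 0 with hm_def
  have hm0 : 0 ≤ m := le_max_right _ _
  have hmR : m ≤ R := by
    rw [hm_def, hR_def]
    apply max_le <;> nlinarith
  have hsub : (⋃ w ∈ N, Metric.ball (w:ℂ) (s/2)) ⊆
      Metric.closedBall (0:ℂ) R \ Metric.ball (0:ℂ) m := by
    intro x hx
    obtain ⟨w, hw, hxw⟩ := Set.mem_iUnion₂.mp hx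
    have hwA : w ∈ A := hNA hw
    have hxw' : dist x w < s / 2 := Metric.mem_ball.mp hxw
    have hxnorm : ‖x‖ ≤ ‖w‖ + s / 2 := by
      have := norm_sub_norm_le x w
      rw [← dist_eq_norm] at this
      linarith
    have hxnorm' : ‖w‖ - s / 2 ≤ ‖x‖ := by
      have := norm_sub_norm_le w x
      rw [← dist_eq_norm, dist_comm] at this
      linarith
    constructor
    · rw [Metric.mem_closedBall, dist_zero_right, hR_def]
      have := hwA.2
      linarith
    · rw [Metric.mem_ball, dist_zero_right, hm_def]
      push_neg
      apply max_le
      · have := hwA.1; linarith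
      · exact norm_nonneg x
  -- measure computation
  have hball_sub : Metric.ball (0:ℂ) m ⊆ Metric.closedBall (0:ℂ) R :=
    (Metric.ball_subset_ball hmR).trans Metric.ball_subset_closedBall
  have hfin : ∀ x : ℝ, (ENNReal.ofReal x ^ 2 * (NNReal.pi : ℝ≥0∞)) ≠ ⊤ := fun x =>
    ENNReal.mul_ne_top (ENNReal.pow_ne_top ENNReal.ofReal_ne_top) ENNReal.coe_ne_top
  have hvol_diff : volume (Metric.closedBall (0:ℂ) R \ Metric.ball (0:ℂ) m)
      = ENNReal.ofReal R ^ 2 * NNReal.pi - ENNReal.ofReal m ^ 2 * NNReal.pi := by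
    rw [measure_diff hball_sub measurableSet_ball.nullMeasurableSet
      (by rw [Complex.volume_ball]; exact hfin m),
      Complex.volume_ball, Complex.volume_closedBall]
  have hvol_union : volume (⋃ w ∈ N, Metric.ball (w:ℂ) (s/2))
      = (N.card : ℝ≥0∞) * (ENNReal.ofReal (s/2) ^ 2 * NNReal.pi) := by
    rw [measure_biUnion_finset hdisj (fun _ _ => measurableSet_ball)]
    simp [Complex.volume_ball, Finset.sum_const, nsmul_eq_mul]
  have hkey : (N.card : ℝ≥0∞) * (ENNReal.ofReal (s/2) ^ 2 * NNReal.pi)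
      ≤ ENNReal.ofReal R ^ 2 * NNReal.pi - ENNReal.ofReal m ^ 2 * NNReal.pi := by
    rw [← hvol_union, ← hvol_diff]
    exact measure_mono hsub
  -- move to real numbers
  have hRnn : 0 ≤ R := by rw [hR_def]; nlinarith
  have hreal : (N.card : ℝ) * ((s/2) ^ 2 * π) ≤ R ^ 2 * π - m ^ 2 * π := by
    have h1 : ((N.card : ℝ≥0∞) * (ENNReal.ofReal (s/2) ^ 2 * NNReal.pi)).toReal
        = (N.card : ℝ) * ((s/2) ^ 2 * π) := by
      rw [ENNReal.toReal_mul, ENNReal.toReal_mul, ENNReal.toReal_pow,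
        ENNReal.toReal_ofReal (by positivity), ENNReal.coe_toReal, NNReal.coe_real_pi]
      simp
    have h2 : (ENNReal.ofReal R ^ 2 * NNReal.pi - ENNReal.ofReal m ^ 2 * NNReal.pi).toReal
        = R ^ 2 * π - m ^ 2 * π := by
      have hmRe : ENNReal.ofReal m ≤ ENNReal.ofReal R := ENNReal.ofReal_le_ofReal hmR
      rw [ENNReal.toReal_sub_of_le (by gcongr) (hfin R),
        ENNReal.toReal_mul, ENNReal.toReal_mul, ENNReal.toReal_pow, ENNReal.toReal_pow,
        ENNReal.toReal_ofReal hRnn, ENNReal.toReal_ofReal hm0,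
        ENNReal.coe_toReal, NNReal.coe_real_pi]
    rw [← h1, ← h2]
    exact ENNReal.toReal_mono (ENNReal.sub_ne_top (hfin R)) hkey
  have hπ : (0:ℝ) < π := Real.pi_pos
  have hcard : (N.card : ℝ) * (s/2) ^ 2 ≤ R ^ 2 - m ^ 2 := by
    nlinarith [hreal]

  refine ⟨N, hNA, ?_, ?_, ?_, ?_⟩
  -- covering
  · intro z hz1 hz2
    have hzA : z ∈ A := ⟨hz1, hz2⟩
    obtain ⟨t, ht, hzt⟩ := Set.mem_iUnion₂.mp (hcover hzA)
    have htT : t ∈ T := hT₀fin.mem_toFinset.mpr ht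
    obtain ⟨w, hw, htw⟩ := hmax t htT
    refine ⟨w, hw, ?_⟩
    have : dist z w ≤ dist z t + dist t w := dist_triangle z t w
    have hzt' : dist z t < ε / 20 := Metric.mem_ball.mp hzt
    have : dist z w < ε / 20 + s := by linarith
    calc ‖z - w‖ = dist z w := (dist_eq_norm z w).symm
      _ < ε / 20 + 19 * ε / 20 := by rw [← hs_def]; exact this
      _ = ε := by ring
  -- separation
  · intro w₁ hw₁ w₂ hw₂ hne
    have h := hNsep w₁ hw₁ w₂ hw₂ hne
    have : ε * r₁ / (2 * r₂) < s := by
      rw [hs_def, div_lt_div_iff₀ (by linarith) (by norm_num)]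
      nlinarith
    calc ε * r₁ / (2 * r₂) < s := this
      _ ≤ dist w₁ w₂ := h
      _ = ‖w₁ - w₂‖ := dist_eq_norm w₁ w₂
  -- case 1 : ε ≤ r₂ - r₁
  · intro hcase
    rcases le_or_gt (s/2) r₁ with hr | hr
    · have hmeq : m = r₁ - s / 2 := max_eq_left (by linarith)
      rw [hmeq, hR_def] at hcard
      rw [show ((r₂ + s/2)^2 - (r₁ - s/2)^2 : ℝ) = (r₂ + r₁) * (r₂ - r₁ + s) from by ring,
        show ((s:ℝ)/2)^2 = (361/1600) * ε^2 from by rw [hs_def]; ring] at hcard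
      have e2 : r₂ - r₁ + s ≤ (39/20) * (r₂ - r₁) := by rw [hs_def]; linarith
      have e3 : (r₂ + r₁) * (r₂ - r₁ + s) ≤ (2*r₂) * ((39/20) * (r₂ - r₁)) :=
        mul_le_mul (by linarith) e2 (by linarith) (by linarith)
      have hX : (0:ℝ) ≤ r₂ * (r₂ - r₁) := mul_nonneg (by linarith) (by linarith)
      rw [show (22:ℝ) * ε⁻¹ ^ 2 * r₂ * (r₂ - r₁) = 22 * r₂ * (r₂ - r₁) / ε^2 from by
        rw [div_eq_mul_inv, ← inv_pow]; ring]
      rw [le_div_iff₀ (by positivity)]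
      nlinarith [hcard, e3, hX]
    · have hmeq : m = 0 := max_eq_right (by linarith)
      rw [hmeq, hR_def] at hcard
      rw [show ((s:ℝ)/2)^2 = (361/1600) * ε^2 from by rw [hs_def]; ring] at hcard
      have l1 : r₂ + s/2 ≤ 99/80 * r₂ := by rw [hs_def]; linarith
      have hR2 : (r₂ + s/2)^2 ≤ (99/80 * r₂)^2 :=
        pow_le_pow_left₀ (by linarith) l1 2
      have hr21 : 61/80 * r₂ ≤ r₂ - r₁ := by
        rw [hs_def] at hr; linarith
      have hmul : 22 * (61/80 * r₂) * r₂ ≤ 22 * (r₂ - r₁) * r₂ := by nlinarith [hr21]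
      rw [show (22:ℝ) * ε⁻¹ ^ 2 * r₂ * (r₂ - r₁) = 22 * r₂ * (r₂ - r₁) / ε^2 from by
        rw [div_eq_mul_inv, ← inv_pow]; ring]
      rw [le_div_iff₀ (by positivity)]
      nlinarith [hcard, hR2, hmul]
  -- case 2 : r₂ - r₁ < ε
  · intro hcase
    have hr₁ε : ε < r₁ := by linarith
    have hmeq : m = r₁ - s / 2 := max_eq_left (by rw [hs_def]; linarith)
    rw [hmeq, hR_def] at hcard
    rw [show ((r₂ + s/2)^2 - (r₁ - s/2)^2 : ℝ) = (r₂ + r₁) * (r₂ - r₁ + s) from by ring,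
      show ((s:ℝ)/2)^2 = (361/1600) * ε^2 from by rw [hs_def]; ring] at hcard
    have e2 : r₂ - r₁ + s ≤ (39/20) * ε := by rw [hs_def]; linarith
    have e3 : (r₂ + r₁) * (r₂ - r₁ + s) ≤ (2*r₂) * ((39/20) * ε) :=
      mul_le_mul (by linarith) e2 (by rw [hs_def]; linarith) (by linarith)
    rw [show (18:ℝ) * ε⁻¹ * r₂ = 18 * r₂ / ε from by rw [div_eq_mul_inv]; ring]
    rw [le_div_iff₀ (by positivity)]
    nlinarith [hcard, e3, hε]
end

section
/- Suppose ξ ∈ ℂ and ζ₁, …, ζₙ ∈ ℂ satisfy: (i) C₁ ≤ |(1/n) ∑_{j=1}^n 1/(ξ - ζ_j)| ≤ C₂; (ii) z ↦ (1/n) ∑_{j=1}^n 1/(z - ζ_j) is Lipschitz with constant k on {z : |z - ξ| ≤ 2/(C₁ n)}; and (iii) min_j |ξ - ζ_j| > 3/(C₁ n). If C > 8(1 + 2C₂²)/C₁³ and n > 4C₂ max{1/C₁, C(k+1)}, then the polynomial q(z) = (z - ξ) ∏_{j=1}^n (z - ζ_j) has exactly one critical point w within distance 3/(2 C₁ n)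 of ξ, and |w - ξ + (1/(n+1)) · 1/((1/n) ∑_{j=1}^n 1/(ξ - ζ_j))| < C(k+1)/n². -/
/-!
Away from the `ζⱼ`, `q'(z) = ∏ (z - ζⱼ) · (1 + (z - ξ) · n S(z))` with `S` the empirical Stieltjes
transform, so the critical points of `q` near `ξ` are the fixed points of
`T(z) = ξ - (n S(z))⁻¹`. On the ball of radius `r = 3 / (2 C₁ n)` the Lipschitz bound keeps
`‖S‖ ≥ 15 C₁ / 16`, hence `T` maps the ball into itself and is a contraction with constant
`O(k / (C₁² n))`; Banach's fixed point theorem gives exactly one critical point there. At that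
point `w - ξ = -(n S(w))⁻¹` while `S(w) - S(ξ) = O(k r)`, which yields the location estimate.
-/

open Finset Metric NNReal Function

theorem LipschitzOnWith.existsUnique_isFixedPt {α : Type*} [MetricSpace α] {f : α → α}
    {s : Set α} {K : ℝ≥0} (hf : LipschitzOnWith K f s) (hK : K < 1) (hsc : IsComplete s)
    (hs : s.Nonempty) (hsf : Set.MapsTo f s s) :
    ∃! x, x ∈ s ∧ IsFixedPt f x := by
  obtain ⟨x₀, hx₀⟩ := hs
  obtain ⟨x, hxs, hfx, -⟩ := ContractingWith.exists_fixedPoint' hsc hsf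
    ⟨hK, hf.mapsToRestrict hsf⟩ hx₀ (edist_ne_top _ _)
  refine ⟨x, ⟨hxs, hfx⟩, fun y ⟨hys, hfy⟩ => dist_le_zero.mp ?_⟩
  have hyx := hf.dist_le_mul y hys x hxs
  rw [hfy.eq, hfx.eq] at hyx
  nlinarith [dist_nonneg (x := y) (y := x), (show (K : ℝ) < 1 from hK)]

theorem existsUnique_sub_inv_eq_self {𝕜 : Type*} [NormedField 𝕜] [CompleteSpace 𝕜]
    {F : 𝕜 → 𝕜} {ξ : 𝕜} {r m : ℝ} {L : ℝ≥0} (hm : 0 < m) (hmr : m⁻¹ ≤ r)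
    (hF : ∀ z ∈ closedBall ξ r, m ≤ ‖F z‖) (hFL : LipschitzOnWith L F (closedBall ξ r))
    (hL : (L : ℝ) < m ^ 2) :
    ∃! z, z ∈ closedBall ξ r ∧ ξ - (F z)⁻¹ = z := by
  have hF0 : ∀ z ∈ closedBall ξ r, F z ≠ 0 := fun z hz =>
    norm_pos_iff.mp (hm.trans_le (hF z hz))
  have hLip : LipschitzOnWith (L / m ^ 2).toNNReal (fun z => ξ - (F z)⁻¹) (closedBall ξ r) := by
    refine .of_dist_le' fun z hz w hw => ?_
    have hFzw := hFL.dist_le_mul z hz w hw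
    rw [dist_eq_norm] at hFzw ⊢
    calc ‖ξ - (F z)⁻¹ - (ξ - (F w)⁻¹)‖ = ‖F z - F w‖ / (‖F z‖ * ‖F w‖) := by
          rw [sub_sub_sub_cancel_left, inv_sub_inv (hF0 w hw) (hF0 z hz), norm_div, norm_mul,
            mul_comm]
      _ ≤ L * dist z w / (m * m) := by
          gcongr
          exacts [hF z hz, hF w hw]
      _ = L / m ^ 2 * dist z w := by ring
  refine hLip.existsUnique_isFixedPt ?_ isClosed_closedBall.isComplete
    ⟨ξ, mem_closedBall_self ((inv_pos.mpr hm).le.trans hmr)⟩ fun z hz => ?_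
  · rw [Real.toNNReal_lt_one, div_lt_one (by positivity)]
    exact hL
  · rw [mem_closedBall, dist_eq_norm, sub_sub_cancel_left, norm_neg, norm_inv]
    exact (inv_anti₀ hm (hF z hz)).trans hmr

theorem deriv_sub_mul_prod_sub {𝕜 ι : Type*} [NontriviallyNormedField 𝕜] [Fintype ι]
    {ξ z : 𝕜} {ζ : ι → 𝕜} (hz : ∀ j, z ≠ ζ j) :
    deriv (fun z => (z - ξ) * ∏ j, (z - ζ j)) z =
      (∏ j, (z - ζ j)) * (1 + (z - ξ) * ∑ j, (z - ζ j)⁻¹) := by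
  classical
  have hprod : HasDerivAt (fun z => ∏ j, (z - ζ j)) (∑ i, ∏ j ∈ univ.erase i, (z - ζ j)) z := by
    simpa using HasDerivAt.fun_finsetProd (u := univ) (f := fun j z => z - ζ j)
      (f' := fun _ => 1) fun i _ => (hasDerivAt_id' z).sub_const (ζ i)
  have hsum : ∀ i ∈ univ, ∏ j ∈ univ.erase i, (z - ζ j) = (∏ j, (z - ζ j)) * (z - ζ i)⁻¹ :=
    fun i hi => by
      rw [← mul_prod_erase univ (fun j => z - ζ j) hi, mul_comm (z - ζ i),
        mul_inv_cancel_right₀ (sub_ne_zero.mpr (hz i))]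
  rw [(((hasDerivAt_id' z).sub_const ξ).fun_mul hprod).deriv, one_mul, sum_congr rfl hsum,
    ← mul_sum]
  ring

theorem deriv_sub_mul_prod_sub_eq_zero_iff {𝕜 ι : Type*} [NontriviallyNormedField 𝕜]
    [Fintype ι] {ξ z : 𝕜} {ζ : ι → 𝕜} (hz : ∀ j, z ≠ ζ j) (hG : ∑ j, (z - ζ j)⁻¹ ≠ 0) :
    deriv (fun z => (z - ξ) * ∏ j, (z - ζ j)) z = 0 ↔ ξ - (∑ j, (z - ζ j)⁻¹)⁻¹ = z := by
  have hprod : ∏ j, (z - ζ j) ≠ 0 := prod_ne_zero_iff.mpr fun j _ => sub_ne_zero.mpr (hz j)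
  rw [deriv_sub_mul_prod_sub hz, mul_eq_zero, or_iff_right hprod]
  generalize ∑ j, (z - ζ j)⁻¹ = G at hG ⊢
  constructor <;> intro h <;> field_simp at h ⊢ <;> linear_combination -h

theorem norm_neg_inv_add_inv_le {𝕜 : Type*} [RCLike 𝕜] {n : ℕ} (hn : n ≠ 0) {a b : 𝕜}
    (ha : a ≠ 0) (hb : b ≠ 0) :
    ‖-((n : 𝕜) * a)⁻¹ + 1 / ((n : 𝕜) + 1) * b⁻¹‖ ≤
      (n * ‖a - b‖ + ‖b‖) / (n * (n + 1) * ‖a‖ * ‖b‖) := by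
  have hn1 : (n : 𝕜) + 1 ≠ 0 := by exact_mod_cast n.succ_ne_zero
  have hid : -((n : 𝕜) * a)⁻¹ + 1 / ((n : 𝕜) + 1) * b⁻¹ =
      ((n : 𝕜) * (a - b) - b) / ((n : 𝕜) * ((n : 𝕜) + 1) * a * b) := by
    field_simp
    ring
  rw [hid, norm_div]
  gcongr
  · exact (norm_sub_le _ _).trans (by rw [norm_mul, RCLike.norm_natCast])
  · have hnorm : ‖(n : 𝕜) + 1‖ = n + 1 := by
      exact_mod_cast RCLike.norm_natCast (K := 𝕜) (n + 1)
    rw [norm_mul, norm_mul, norm_mul, RCLike.norm_natCast, hnorm]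

theorem norm_sub_mul_le_norm_of_mem_closedBall {E F : Type*} [SeminormedAddCommGroup E]
    [SeminormedAddCommGroup F] {f : E → F} {x y : E} {k r : ℝ} (hk : 0 ≤ k)
    (hy : y ∈ closedBall x r) (hf : ‖f y - f x‖ ≤ k * ‖y - x‖) : ‖f x‖ - k * r ≤ ‖f y‖ := by
  have hkr : k * ‖y - x‖ ≤ k * r := by gcongr; exact mem_closedBall_iff_norm.mp hy
  linarith [norm_sub_norm_le (f x) (f y), norm_sub_rev (f x) (f y)]

section StieltjesTransform

variable {𝕜 : Type*} [RCLike 𝕜] {S : 𝕜 → 𝕜} {ξ : 𝕜} {n : ℕ} {C₁ k r : ℝ}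

theorem existsUnique_sub_inv_natCast_mul_eq_self (hn : 0 < n) (hC₁ : 0 < C₁) (hk : 0 ≤ k)
    (hkr : k * r ≤ C₁ / 16) (hr : 16 / (15 * C₁ * n) ≤ r)
    (hSlb : ∀ z ∈ closedBall ξ r, 15 * C₁ / 16 ≤ ‖S z‖)
    (hSL : ∀ z ∈ closedBall ξ r, ∀ w ∈ closedBall ξ r, ‖S z - S w‖ ≤ k * ‖z - w‖) :
    ∃! z, z ∈ closedBall ξ r ∧ ξ - ((n : 𝕜) * S z)⁻¹ = z := by
  have hn' : (0 : ℝ) < n := Nat.cast_pos.mpr hn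
  have hnSL : LipschitzOnWith (n * k).toNNReal (fun z => (n : 𝕜) * S z) (closedBall ξ r) :=
    .of_dist_le' fun z hz w hw => by
      rw [dist_eq_norm, dist_eq_norm, ← mul_sub, norm_mul, RCLike.norm_natCast, mul_assoc]
      exact mul_le_mul_of_nonneg_left (hSL z hz w hw) hn'.le
  refine existsUnique_sub_inv_eq_self (m := n * (15 * C₁ / 16)) (by positivity)
    (le_trans (le_of_eq (by field_simp)) hr) (fun z hz => ?_) hnSL ?_
  · rw [norm_mul, RCLike.norm_natCast]
    exact mul_le_mul_of_nonneg_left (hSlb z hz) hn'.le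
  · rw [Real.coe_toNNReal _ (by positivity)]
    have hk' := (mul_le_mul_of_nonneg_left hr hk).trans hkr
    rw [mul_div_assoc', div_le_div_iff₀ (by positivity) (by norm_num)] at hk'
    nlinarith [mul_pos hn' (pow_pos hC₁ 2)]

theorem norm_sub_add_inv_le_of_eq_sub_inv (hn : 0 < n) (hC₁ : 0 < C₁) (hk : 0 ≤ k)
    (hSξ : C₁ ≤ ‖S ξ‖)
    (hSlb : ∀ z ∈ closedBall ξ r, 15 * C₁ / 16 ≤ ‖S z‖)
    (hSL : ∀ z ∈ closedBall ξ r, ∀ w ∈ closedBall ξ r, ‖S z - S w‖ ≤ k * ‖z - w‖)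
    {w : 𝕜} (hw : w ∈ closedBall ξ r) (hfix : ξ - ((n : 𝕜) * S w)⁻¹ = w) :
    ‖w - ξ + 1 / ((n : 𝕜) + 1) * (S ξ)⁻¹‖ ≤
      (n * (k * r) + ‖S ξ‖) / (n * (n + 1) * (15 * C₁ / 16) * ‖S ξ‖) := by
  have hr : 0 ≤ r := dist_nonneg.trans hw
  have hSw := hSlb w hw
  rw [show w - ξ = -((n : 𝕜) * S w)⁻¹ by linear_combination -hfix]
  refine (norm_neg_inv_add_inv_le hn.ne' (norm_pos_iff.mp (by linarith))
    (norm_pos_iff.mp (by linarith))).trans ?_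
  have hkwr : ‖S w - S ξ‖ ≤ k * r := (hSL w hw ξ (mem_closedBall_self hr)).trans
    (mul_le_mul_of_nonneg_left (mem_closedBall_iff_norm.mp hw) hk)
  gcongr
  exact mul_pos (by positivity) (hC₁.trans_le hSξ)

end StieltjesTransform

theorem pairing_error_lt {n C₁ C₂ k C e a b : ℝ} (hn : 0 < n) (hC₁ : 0 < C₁) (hk : 0 ≤ k)
    (hC : 8 * (1 + 2 * C₂ ^ 2) / C₁ ^ 3 < C) (he : e ≤ 3 * k / (2 * C₁))
    (ha : 15 * C₁ / 16 ≤ a) (hb : C₁ ≤ b) (hb' : b ≤ C₂) :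
    (e + b) / (n * (n + 1) * a * b) < C * (k + 1) / n ^ 2 := by
  have hCC₁ : 8 * (1 + 2 * C₂ ^ 2) < C * C₁ ^ 3 := (div_lt_iff₀ (by positivity)).mp hC
  calc (e + b) / (n * (n + 1) * a * b)
      ≤ (3 * k / (2 * C₁) + C₂) / (n * n * (15 * C₁ / 16) * C₁) := by
        have : 0 < C₂ := hC₁.trans_le (hb.trans hb')
        have : 0 < a := by linarith
        gcongr
        linarith
      _ = 8 * (3 * k + 2 * C₁ * C₂) / (15 * C₁ ^ 3) / n ^ 2 := by
        field_simp
        ring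
      _ < C * (k + 1) / n ^ 2 := by
        gcongr
        rw [div_lt_iff₀ (by positivity)]
        nlinarith [mul_le_mul_of_nonneg_right (hb.trans hb') hC₁.le, sq_nonneg C₂,
          mul_nonneg hk (sq_nonneg C₂)]

theorem pos_of_pairing_constants {n C₁ C₂ k C : ℝ} (hC₁ : 0 < C₁) (hC₁₂ : C₁ ≤ C₂)
    (hn : 4 * C₂ * max (1 / C₁) (C * (k + 1)) < n) : 0 < n := by
  have : 0 < 4 * C₂ * (1 / C₁) := by have := hC₁.trans_le hC₁₂; positivity
  nlinarith [le_max_left (1 / C₁) (C * (k + 1))]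

theorem mul_le_of_pairing_constants {n C₁ C₂ k C : ℝ} (hC₁ : 0 < C₁) (hk : 0 ≤ k)
    (hC₁₂ : C₁ ≤ C₂) (hC : 8 * (1 + 2 * C₂ ^ 2) / C₁ ^ 3 < C)
    (hn : 4 * C₂ * max (1 / C₁) (C * (k + 1)) < n) : 32 * k ≤ n * C₁ ^ 2 := by
  have hCC₁ : 8 < C * C₁ ^ 3 := by
    have := (div_lt_iff₀ (by positivity)).mp hC
    nlinarith [sq_nonneg C₂]
  have hCk : 4 * C₁ * (C * k) ≤ n := by
    have hC0 : 0 < C := by nlinarith [pow_pos hC₁ 3]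
    have := le_max_right (1 / C₁) (C * (k + 1))
    nlinarith [mul_nonneg hC0.le hk]
  nlinarith [mul_le_mul_of_nonneg_right hCk (sq_nonneg C₁)]

theorem deterministic_pairing_general (n : ℕ) (ξ : ℂ) (ζ : Fin n → ℂ) (C₁ C₂ k C : ℝ)
    (hC₁ : 0 < C₁) (hk : 0 ≤ k)
    (h1a : C₁ ≤ ‖(1 / (n : ℂ)) * ∑ j, (ξ - ζ j)⁻¹‖)
    (h1b : ‖(1 / (n : ℂ)) * ∑ j, (ξ - ζ j)⁻¹‖ ≤ C₂)
    (h2 : ∀ z w : ℂ, ‖z - ξ‖ ≤ 2 / (C₁ * n) → ‖w - ξ‖ ≤ 2 / (C₁ * n) →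
      ‖(1 / (n : ℂ)) * ∑ j, (z - ζ j)⁻¹ - (1 / (n : ℂ)) * ∑ j, (w - ζ j)⁻¹‖ ≤
        k * ‖z - w‖)
    (h3 : ∀ j, 3 / (C₁ * n) < ‖ξ - ζ j‖)
    (hC : 8 * (1 + 2 * C₂ ^ 2) / C₁ ^ 3 < C)
    (hn : 4 * C₂ * max (1 / C₁) (C * (k + 1)) < (n : ℝ)) :
    (∃! w : ℂ,
      deriv (fun z : ℂ => (z - ξ) * ∏ j, (z - ζ j)) w = 0 ∧
        ‖w - ξ‖ ≤ 3 / (2 * C₁ * n)) ∧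
    ∀ w : ℂ, deriv (fun z : ℂ => (z - ξ) * ∏ j, (z - ζ j)) w = 0 →
      ‖w - ξ‖ ≤ 3 / (2 * C₁ * n) →
      ‖w - ξ + (1 / ((n : ℂ) + 1)) * ((1 / (n : ℂ)) * ∑ j, (ξ - ζ j)⁻¹)⁻¹‖ <
        C * (k + 1) / (n : ℝ) ^ 2 := by
  set S : ℂ → ℂ := fun z => (1 / (n : ℂ)) * ∑ j, (z - ζ j)⁻¹
  set r : ℝ := 3 / (2 * C₁ * n) with hr
  have hC₁₂ : C₁ ≤ C₂ := h1a.trans h1b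
  have hn0 : 0 < n := Nat.cast_pos.mp (pos_of_pairing_constants hC₁ hC₁₂ hn)
  have hn' : (0 : ℝ) < n := Nat.cast_pos.mpr hn0
  have hkn := mul_le_of_pairing_constants hC₁ hk hC₁₂ hC hn
  obtain ⟨hkr, hr16, hr2, hr3⟩ : k * r ≤ C₁ / 16 ∧ 16 / (15 * C₁ * n) ≤ r ∧
      r ≤ 2 / (C₁ * n) ∧ r < 3 / (C₁ * n) := by
    rw [hr]
    refine ⟨?_, ?_, ?_, ?_⟩ <;> field_simp <;> nlinarith
  have hSL : ∀ z ∈ closedBall ξ r, ∀ w ∈ closedBall ξ r, ‖S z - S w‖ ≤ k * ‖z - w‖ :=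
    fun z hz w hw => h2 z w ((mem_closedBall_iff_norm.mp hz).trans hr2)
      ((mem_closedBall_iff_norm.mp hw).trans hr2)
  have hSlb : ∀ z ∈ closedBall ξ r, 15 * C₁ / 16 ≤ ‖S z‖ := fun z hz => by
    linarith [norm_sub_mul_le_norm_of_mem_closedBall hk hz
      (hSL z hz ξ (mem_closedBall_self (dist_nonneg.trans hz)))]
  have hcrit : ∀ z, (deriv (fun z : ℂ => (z - ξ) * ∏ j, (z - ζ j)) z = 0 ∧ ‖z - ξ‖ ≤ r) ↔
      (z ∈ closedBall ξ r ∧ ξ - ((n : ℂ) * S z)⁻¹ = z) := fun z => by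
    rw [mem_closedBall_iff_norm, and_comm]
    refine and_congr_right fun hz => ?_
    rw [← mul_assoc, mul_one_div_cancel (by exact_mod_cast hn0.ne'), one_mul]
    refine deriv_sub_mul_prod_sub_eq_zero_iff (fun j hj => ?_) ?_
    · linarith [h3 j, norm_sub_rev ξ z, congrArg (‖ξ - ·‖) hj]
    · simpa [S, hn0.ne'] using norm_pos_iff.mp
        ((by positivity : 0 < 15 * C₁ / 16).trans_le (hSlb z (mem_closedBall_iff_norm.mpr hz)))
  refine ⟨(existsUnique_congr hcrit).2 (existsUnique_sub_inv_natCast_mul_eq_self hn0 hC₁ hk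
    hkr hr16 hSlb hSL), fun w hw hwr => ?_⟩
  obtain ⟨hwr, hw⟩ := (hcrit w).1 ⟨hw, hwr⟩
  refine (norm_sub_add_inv_le_of_eq_sub_inv (S := S) hn0 hC₁ hk h1a hSlb hSL hwr hw).trans_lt
    (pairing_error_lt hn' hC₁ hk hC (le_of_eq (by rw [hr]; field_simp)) le_rfl h1a h1b)

/-- Deterministic pairing theorem (Theorem 3.1 of [OW2]): a root `ξ` sufficiently
isolated from `ζ₁, …, ζₙ` attracts exactly one critical point of
`q(z) = (z - ξ) ∏ (z - ζⱼ)`, located at the predicted position. -/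
theorem deterministic_pairing (n : ℕ) (ξ : ℂ) (ζ : Fin n → ℂ) (C₁ C₂ k C : ℝ)
    (hC₁ : 0 < C₁) (hC₂ : 0 < C₂) (hk : 0 ≤ k)
    (h1a : C₁ ≤ ‖(1 / (n : ℂ)) * ∑ j, (ξ - ζ j)⁻¹‖)
    (h1b : ‖(1 / (n : ℂ)) * ∑ j, (ξ - ζ j)⁻¹‖ ≤ C₂)
    (h2 : ∀ z w : ℂ, ‖z - ξ‖ ≤ 2 / (C₁ * n) → ‖w - ξ‖ ≤ 2 / (C₁ * n) →
      ‖(1 / (n : ℂ)) * ∑ j, (z - ζ j)⁻¹ - (1 / (n : ℂ)) * ∑ j, (w - ζ j)⁻¹‖ ≤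
        k * ‖z - w‖)
    (h3 : ∀ j, 3 / (C₁ * n) < ‖ξ - ζ j‖)
    (hC : 8 * (1 + 2 * C₂ ^ 2) / C₁ ^ 3 < C)
    (hn : 4 * C₂ * max (1 / C₁) (C * (k + 1)) < (n : ℝ)) :
    (∃! w : ℂ,
      deriv (fun z : ℂ => (z - ξ) * ∏ j, (z - ζ j)) w = 0 ∧
        ‖w - ξ‖ ≤ 3 / (2 * C₁ * n)) ∧
    ∀ w : ℂ, deriv (fun z : ℂ => (z - ξ) * ∏ j, (z - ζ j)) w = 0 →
      ‖w - ξ‖ ≤ 3 / (2 * C₁ * n) →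
      ‖w - ξ + (1 / ((n : ℂ) + 1)) * ((1 / (n : ℂ)) * ∑ j, (ξ - ζ j)⁻¹)⁻¹‖ <
        C * (k + 1) / (n : ℝ) ^ 2 :=
  deterministic_pairing_general n ξ ζ C₁ C₂ k C hC₁ hk h1a h1b h2 h3 hC hn
end
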